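/- arXiv:2106.16052 — 10 statements merged into one kernel-verified Lean document; each statement's English description precedes it below -/
import Mathlib

section
/- Let γ > 0, δ ≥ 0, k > 0, set t_i = i·k, and let φ_1, …, φ_n be real numbers. Then the right rectangle rule quadrature with kernel β(t) = γ·e^{−δt} is positive: k·∑_{i=1}^{n} ( k·∑_{j=1}^{i} γ·e^{−δ(t_i−t_j)}·φ_j )·φ_i ≥ 0. -/
open Finset

private lemma S_succ (r : ℝ) (φ : ℕ → ℝ) (n : ℕ) :
    ∑ j ∈ Icc 1 (n + 1), r ^ (n + 1 - j) * φ j =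
      r * (∑ j ∈ Icc 1 n, r ^ (n - j) * φ j) + φ (n + 1) := by
  rw [Finset.sum_Icc_succ_top (by omega : 1 ≤ n + 1), Finset.mul_sum]
  simp only [Nat.sub_self, pow_zero, one_mul]
  congr 1
  apply Finset.sum_congr rfl
  intro j hj
  simp only [Finset.mem_Icc] at hj
  have : n + 1 - j = (n - j) + 1 := by omega
  rw [this, pow_succ]
  ring

private lemma key_ineq (r : ℝ) (hr0 : 0 ≤ r) (hr1 : r ≤ 1) (φ : ℕ → ℝ) (n : ℕ) :
    r * (∑ j ∈ Icc 1 n, r ^ (n - j) * φ j) ^ 2 ≤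
      2 * ∑ i ∈ Icc 1 n, (∑ j ∈ Icc 1 i, r ^ (i - j) * φ j) * φ i := by
  induction n with
  | zero => simp
  | succ n ih =>
    set S := ∑ j ∈ Icc 1 n, r ^ (n - j) * φ j with hS
    have hnew : ∑ j ∈ Icc 1 (n + 1), r ^ (n + 1 - j) * φ j = r * S + φ (n + 1) :=
      S_succ r φ n
    rw [hnew, Finset.sum_Icc_succ_top (by omega : 1 ≤ n + 1), hnew]
    nlinarith [ih, sq_nonneg (r * S + φ (n + 1) - S), sq_nonneg (r * S + φ (n + 1)),
      mul_nonneg hr0 (sq_nonneg (r * S + φ (n + 1) - S))]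

/-- Positivity of the right rectangle rule quadrature with kernel
`β(t) = γ · exp (−δ t)`. -/
theorem right_rectangle_rule_positive
    (γ δ k : ℝ) (hγ : 0 < γ) (hδ : 0 ≤ δ) (hk : 0 < k)
    (n : ℕ) (φ : ℕ → ℝ) :
    0 ≤ k * ∑ i ∈ Finset.Icc 1 n,
      (k * ∑ j ∈ Finset.Icc 1 i,
        γ * Real.exp (-δ * ((i : ℝ) * k - (j : ℝ) * k)) * φ j) * φ i := by
  set r := Real.exp (-δ * k) with hr
  have hr0 : 0 ≤ r := (Real.exp_pos _).le
  have hr1 : r ≤ 1 := Real.exp_le_one_iff.mpr (by nlinarith)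
  have hrw : ∀ i ∈ Finset.Icc 1 n,
      (k * ∑ j ∈ Finset.Icc 1 i,
        γ * Real.exp (-δ * ((i : ℝ) * k - (j : ℝ) * k)) * φ j) * φ i
      = (k * γ) * ((∑ j ∈ Icc 1 i, r ^ (i - j) * φ j) * φ i) := by
    intro i _
    have : ∀ j ∈ Finset.Icc 1 i,
        γ * Real.exp (-δ * ((i : ℝ) * k - (j : ℝ) * k)) * φ j
        = γ * (r ^ (i - j) * φ j) := by
      intro j hj
      simp only [Finset.mem_Icc] at hj
      have hcast : ((i : ℝ) * k - (j : ℝ) * k) = ((i - j : ℕ) : ℝ) * k := by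
        have : ((i - j : ℕ) : ℝ) = (i : ℝ) - (j : ℝ) := by
          push_cast [Nat.cast_sub hj.2]; ring
        rw [this]; ring
      rw [hcast]
      have : -δ * (((i - j : ℕ) : ℝ) * k) = ((i - j : ℕ) : ℝ) * (-δ * k) := by ring
      rw [this, Real.exp_nat_mul, ← hr]
      ring
    rw [Finset.sum_congr rfl this, ← Finset.mul_sum]
    ring
  rw [Finset.sum_congr rfl hrw, ← Finset.mul_sum]
  have hsum : 0 ≤ ∑ i ∈ Icc 1 n, (∑ j ∈ Icc 1 i, r ^ (i - j) * φ j) * φ i := by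
    have h := key_ineq r hr0 hr1 φ n
    nlinarith [mul_nonneg hr0 (sq_nonneg (∑ j ∈ Icc 1 n, r ^ (n - j) * φ j))]
  positivity
end

section
/- Let V be a real vector space, let a : V × V → ℝ be a symmetric bilinear form that is positive semidefinite (a(v,v) ≥ 0 for all v ∈ V), let δ ≥ 0, k > 0, set t_i = i·k, and let φ_1, …, φ_n ∈ V. Then ∑_{i=1}^{n} ∑_{j=1}^{i} e^{−δ(t_i−t_j)}·a(φ_j, φ_i) ≥ 0. -/
/-- Bilinear-form version of the positivity of the right rectangle rule
with exponentially decaying kernel. -/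
theorem right_rectangle_rule_positive_bilinear
    {V : Type*} [AddCommGroup V] [Module ℝ V]
    (a : V →ₗ[ℝ] V →ₗ[ℝ] ℝ)
    (hsymm : ∀ u v : V, a u v = a v u)
    (hpsd : ∀ v : V, 0 ≤ a v v)
    (δ k : ℝ) (hδ : 0 ≤ δ) (hk : 0 < k)
    (n : ℕ) (φ : ℕ → V) :
    0 ≤ ∑ i ∈ Finset.Icc 1 n, ∑ j ∈ Finset.Icc 1 i,
      Real.exp (-δ * ((i : ℝ) * k - (j : ℝ) * k)) * a (φ j) (φ i) := by
  set r := Real.exp (-δ * k) with hrdef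
  have hr0 : 0 < r := Real.exp_pos _
  have hr1 : r ≤ 1 := by
    rw [hrdef, Real.exp_le_one_iff]
    nlinarith
  set ψ : ℕ → V := fun i => ∑ j ∈ Finset.Icc 1 i, r ^ (i - j) • φ j with hψ
  have key : ∀ i : ℕ, (∑ j ∈ Finset.Icc 1 i,
      Real.exp (-δ * ((i : ℝ) * k - (j : ℝ) * k)) * a (φ j) (φ i)) = a (ψ i) (φ i) := by
    intro i
    rw [hψ]
    simp only [map_sum, map_smul, LinearMap.sum_apply, LinearMap.smul_apply, smul_eq_mul]
    refine Finset.sum_congr rfl fun j hj => ?_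
    have hji : j ≤ i := (Finset.mem_Icc.mp hj).2
    congr 1
    rw [hrdef, ← Real.exp_nat_mul]
    congr 1
    rw [Nat.cast_sub hji]
    ring
  have hrec : ∀ m : ℕ, ψ (m + 1) = r • ψ m + φ (m + 1) := by
    intro m
    rw [hψ]
    simp only
    rw [Finset.sum_Icc_succ_top (Nat.le_add_left 1 m), Nat.sub_self, pow_zero, one_smul,
      Finset.smul_sum]
    congr 1
    refine Finset.sum_congr rfl fun j hj => ?_
    have hj' : j ≤ m := (Finset.mem_Icc.mp hj).2
    rw [smul_smul, ← pow_succ']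
    congr 2
    omega
  have cauchy : ∀ u v : V, 2 * a u v ≤ a u u + a v v := by
    intro u v
    have h := hpsd (u - v)
    simp only [map_sub, LinearMap.sub_apply] at h
    have hs := hsymm u v
    linarith
  have claim : ∀ m : ℕ, (1 / 2) * a (ψ m) (ψ m) ≤ ∑ i ∈ Finset.Icc 1 m, a (ψ i) (φ i) := by
    intro m
    induction m with
    | zero => simp [hψ]
    | succ m ih =>
      rw [Finset.sum_Icc_succ_top (Nat.le_add_left 1 m)]
      have hφ : φ (m + 1) = ψ (m + 1) - r • ψ m := by rw [hrec m]; abel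
      have hterm : a (ψ (m + 1)) (φ (m + 1)) =
          a (ψ (m + 1)) (ψ (m + 1)) - r * a (ψ (m + 1)) (ψ m) := by
        rw [hφ, map_sub, map_smul, smul_eq_mul]
      have hC := cauchy (ψ (m + 1)) (ψ m)
      have h1 := hpsd (ψ (m + 1))
      have h2 := hpsd (ψ m)
      rw [hterm]
      nlinarith [mul_le_mul_of_nonneg_left hC hr0.le]
  have hfin : (0 : ℝ) ≤ ∑ i ∈ Finset.Icc 1 n, a (ψ i) (φ i) := by
    have h0 := hpsd (ψ n)
    linarith [claim n]
  calc (0 : ℝ) ≤ ∑ i ∈ Finset.Icc 1 n, a (ψ i) (φ i) := hfin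
    _ = _ := (Finset.sum_congr rfl fun i _ => key i).symm
end

section
/- Let δ ≥ 0, T > 0 and let φ : [0,T] → ℝ be continuous. Then ∫_0^{T} φ(t)·( ∫_0^{t} e^{−δ(t−s)}·φ(s) ds ) dt ≥ 0. -/
/-!
Substituting `g s = exp (δ s) φ s` and `u t = ∫_0^t g` turns the integrand into
`exp (-2δ t) u(t) u'(t) = exp (-2δ t) (u²/2)'(t)`. Integrating by parts against the positive,
nonincreasing weight `exp (-2δ t)` leaves
`exp (-2δ T) u(T)²/2 + δ ∫_0^T exp (-2δ t) u(t)² dt ≥ 0`.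
Continuity of `φ` is only needed on `[0, T]`, so `φ` is first replaced by a continuous extension.
-/

open Set MeasureTheory intervalIntegral

theorem integral_mul_mul_deriv_nonneg_of_deriv_nonpos {w w' u u' : ℝ → ℝ} {T : ℝ}
    (hT : 0 ≤ T) (hw : ∀ x ∈ Icc 0 T, HasDerivAt w (w' x) x)
    (hu : ∀ x ∈ Icc 0 T, HasDerivAt u (u' x) x)
    (hw'_int : IntervalIntegrable w' volume 0 T) (hu'_int : IntervalIntegrable u' volume 0 T)
    (hu0 : u 0 = 0) (hwT : 0 ≤ w T) (hw'_nonpos : ∀ x ∈ Icc 0 T, w' x ≤ 0) :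
    0 ≤ ∫ t in 0..T, w t * (u t * u' t) := by
  have hu_sq : ∀ x ∈ Icc 0 T, HasDerivAt (fun t => u t ^ 2 / 2) (u x * u' x) x := fun x hx =>
    (((hu x hx).pow 2).div_const 2).congr_deriv (by ring)
  have hu_cont : ContinuousOn u (uIcc 0 T) := by
    rw [uIcc_of_le hT]
    exact fun x hx => (hu x hx).continuousAt.continuousWithinAt
  rw [integral_mul_deriv_eq_deriv_mul (by rwa [uIcc_of_le hT]) (by rwa [uIcc_of_le hT]) hw'_int
    (hu'_int.continuousOn_mul hu_cont)]
  have h_rest : 0 ≤ -∫ x in 0..T, w' x * (u x ^ 2 / 2) := by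
    rw [← intervalIntegral.integral_neg]
    exact integral_nonneg hT fun x hx =>
      neg_nonneg.2 (mul_nonpos_of_nonpos_of_nonneg (hw'_nonpos x hx) (by positivity))
  have h_end : 0 ≤ w T * (u T ^ 2 / 2) := mul_nonneg hwT (by positivity)
  simp only [hu0]
  linarith

theorem exp_kernel_integrand_eq (δ t : ℝ) (φ : ℝ → ℝ) :
    φ t * ∫ s in 0..t, Real.exp (-δ * (t - s)) * φ s =
      Real.exp (-(2 * δ) * t) *
        ((∫ s in 0..t, Real.exp (δ * s) * φ s) * (Real.exp (δ * t) * φ t)) := by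
  have h_split : ∀ s,
      Real.exp (-δ * (t - s)) * φ s = Real.exp (-δ * t) * (Real.exp (δ * s) * φ s) := by
    intro s
    rw [← mul_assoc, ← Real.exp_add]; ring_nf
  have h_exp : Real.exp (-δ * t) = Real.exp (-(2 * δ) * t) * Real.exp (δ * t) := by
    rw [← Real.exp_add]; ring_nf
  simp_rw [h_split, intervalIntegral.integral_const_mul, h_exp]
  ring

theorem integral_exp_kernel_nonneg_of_continuous {δ T : ℝ} (hδ : 0 ≤ δ) (hT : 0 ≤ T)
    {φ : ℝ → ℝ} (hφ : Continuous φ) :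
    0 ≤ ∫ t in 0..T, φ t * ∫ s in 0..t, Real.exp (-δ * (t - s)) * φ s := by
  have hg : Continuous fun s => Real.exp (δ * s) * φ s := by fun_prop
  have hw : ∀ x, HasDerivAt (fun t => Real.exp (-(2 * δ) * t))
      (-(2 * δ) * Real.exp (-(2 * δ) * x)) x := fun x => by
    simpa [mul_comm] using ((hasDerivAt_id x).const_mul (-(2 * δ))).exp
  have hu : ∀ x, HasDerivAt (fun t => ∫ s in 0..t, Real.exp (δ * s) * φ s)
      (Real.exp (δ * x) * φ x) x := fun x =>
    integral_hasDerivAt_right (hg.intervalIntegrable 0 x) (hg.stronglyMeasurableAtFilter _ _)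
      hg.continuousAt
  simp_rw [exp_kernel_integrand_eq]
  exact integral_mul_mul_deriv_nonneg_of_deriv_nonpos hT (fun x _ => hw x) (fun x _ => hu x)
    (Continuous.intervalIntegrable (by fun_prop) 0 T) (hg.intervalIntegrable 0 T) integral_same
    (Real.exp_pos _).le
    fun x _ => mul_nonpos_of_nonpos_of_nonneg (by linarith) (Real.exp_pos _).le

theorem integral_mul_integral_congr {K : ℝ → ℝ → ℝ} {φ ψ : ℝ → ℝ} {T : ℝ}
    (hT : 0 ≤ T) (h : EqOn φ ψ (Icc 0 T)) :
    ∫ t in 0..T, φ t * ∫ s in 0..t, K t s * φ s =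
      ∫ t in 0..T, ψ t * ∫ s in 0..t, K t s * ψ s := by
  refine integral_congr fun t ht => ?_
  rw [uIcc_of_le hT] at ht
  have h_inner : ∫ s in 0..t, K t s * φ s = ∫ s in 0..t, K t s * ψ s :=
    integral_congr fun s hs => by
      rw [uIcc_of_le ht.1] at hs
      simp only [h ⟨hs.1, hs.2.trans ht.2⟩]
  simp only [h ht, h_inner]

/-- Positivity of the memory kernel `exp (−δ t)`:
`∫_0^T φ(t) (∫_0^t exp (−δ(t−s)) φ(s) ds) dt ≥ 0`. -/
theorem exp_kernel_positive
    (δ T : ℝ) (hδ : 0 ≤ δ) (hT : 0 < T)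
    (φ : ℝ → ℝ) (hφ : ContinuousOn φ (Set.Icc 0 T)) :
    0 ≤ ∫ t in (0:ℝ)..T, φ t * ∫ s in (0:ℝ)..t, Real.exp (-δ * (t - s)) * φ s := by
  set ψ : ℝ → ℝ := fun x => φ (projIcc 0 T hT.le x)
  have hψ : Continuous ψ := hφ.comp_continuous (continuous_subtype_val.comp continuous_projIcc)
    fun x => (projIcc 0 T hT.le x).2
  have hψφ : EqOn ψ φ (Icc 0 T) := fun x hx => by simp only [ψ, projIcc_of_mem hT.le hx]
  rw [← integral_mul_integral_congr hT.le hψφ]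
  exact integral_exp_kernel_nonneg_of_continuous hδ hT.le hψ
end

section
/- Let δ > 0, k > 0, K ≥ 0, set t_n = n·k, and let E^0, E^1, …, E^N be nonnegative real numbers satisfying, for every 1 ≤ n ≤ N, (E^n − E^{n−1})/k + 2·((e^{δk} − 1)/k)·E^n ≤ K. Then for every 1 ≤ n ≤ N, E^n ≤ e^{−δ t_n}·E^0 + (k/(e^{δk} − 1))·K; in particular E^n ≤ e^{−δ t_n}·E^0 + K/δ. -/
/-!
Since `1 + (e^{δk} − 1) = e^{δk}`, and `E^n ≥ 0` lets us drop half of the damping term, each step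
gives the affine contraction `E^n ≤ e^{−δk} (E^{n−1} + k K)`. Its fixed point is `k K / (e^{δk} − 1)`,
so iterating yields `E^n ≤ e^{−δ n k} E^0 + k K / (e^{δk} − 1)`, and `e^{δk} − 1 ≥ δ k` bounds the
constant by `K / δ`.
-/

open Real

theorem le_pow_mul_add_of_le_mul_add {q b C : ℝ} {N : ℕ} {x : ℕ → ℝ}
    (hq : 0 ≤ q) (hC : 0 ≤ C) (hfix : q * C + b ≤ C)
    (hx : ∀ n < N, x (n + 1) ≤ q * x n + b) :
    ∀ n ≤ N, x n ≤ q ^ n * x 0 + C := by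
  intro n hn
  induction n with
  | zero => simpa using hC
  | succ n ih =>
    calc x (n + 1) ≤ q * x n + b := hx n hn
      _ ≤ q * (q ^ n * x 0 + C) + b := by gcongr; exact ih (by omega)
      _ = q ^ (n + 1) * x 0 + (q * C + b) := by ring
      _ ≤ q ^ (n + 1) * x 0 + C := by gcongr

theorem one_add_mul_le_of_damped_diff_le {x y k a K : ℝ} (hk : 0 < k) (ha : 0 ≤ a) (hy : 0 ≤ y)
    (h : (y - x) / k + 2 * (a / k) * y ≤ K) :
    (1 + a) * y ≤ x + k * K := by
  have hscaled : (1 + 2 * a) * y - x ≤ k * K := by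
    rw [← div_le_iff₀' hk]
    calc ((1 + 2 * a) * y - x) / k = (y - x) / k + 2 * (a / k) * y := by ring
      _ ≤ K := h
  nlinarith [mul_nonneg ha hy]

theorem div_exp_mul_sub_one_le_inv {δ k : ℝ} (hδ : 0 < δ) (hk : 0 < k) :
    k / (exp (δ * k) - 1) ≤ δ⁻¹ := by
  have hle : δ * k ≤ exp (δ * k) - 1 := by linarith [add_one_le_exp (δ * k)]
  rw [div_le_iff₀ (hle.trans_lt' (mul_pos hδ hk)), ← div_eq_inv_mul, le_div_iff₀' hδ]
  exact hle

/-- Discrete exponential-decay lemma: a nonnegative sequence whose backward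
difference quotient satisfies a damped inequality with damping coefficient
`2 (e^{δk} − 1)/k` decays exponentially up to a constant. -/
theorem discrete_exponential_decay
    (δ k K : ℝ) (hδ : 0 < δ) (hk : 0 < k) (hK : 0 ≤ K)
    (N : ℕ) (E : ℕ → ℝ) (hE : ∀ n, 0 ≤ E n)
    (hyp : ∀ n : ℕ, 1 ≤ n → n ≤ N →
      (E n - E (n - 1)) / k + 2 * ((Real.exp (δ * k) - 1) / k) * E n ≤ K) :
    ∀ n : ℕ, 1 ≤ n → n ≤ N →
      E n ≤ Real.exp (-δ * ((n : ℝ) * k)) * E 0 + (k / (Real.exp (δ * k) - 1)) * K ∧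
      E n ≤ Real.exp (-δ * ((n : ℝ) * k)) * E 0 + K / δ := by
  intro n _ hnN
  set q := exp (-(δ * k))
  have hq : q * exp (δ * k) = 1 := by rw [← exp_add, neg_add_cancel, exp_zero]
  have ha : 0 < exp (δ * k) - 1 := by simpa using mul_pos hδ hk
  have hstep : ∀ m < N, E (m + 1) ≤ q * E m + q * (k * K) := by
    intro m hm
    have h := one_add_mul_le_of_damped_diff_le hk ha.le (hE _) (hyp (m + 1) (by omega) hm)
    rw [add_sub_cancel, Nat.add_sub_cancel] at h
    calc E (m + 1) = q * (exp (δ * k) * E (m + 1)) := by rw [← mul_assoc, hq, one_mul]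
      _ ≤ q * E m + q * (k * K) := by rw [← mul_add]; gcongr
  have hfix : q * (k / (exp (δ * k) - 1) * K) + q * (k * K) = k / (exp (δ * k) - 1) * K := by
    generalize exp (δ * k) = e at ha hq
    field_simp
    linear_combination K * hq
  have hdecay := le_pow_mul_add_of_le_mul_add (exp_pos _).le (by positivity) hfix.le hstep n hnN
  rw [← exp_nat_mul, show (n : ℝ) * -(δ * k) = -δ * (n * k) by ring] at hdecay
  refine ⟨hdecay, hdecay.trans ?_⟩
  grw [div_exp_mul_sub_one_le_inv hδ hk]
  rw [inv_mul_eq_div]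
end

section
/- Let α > 0, k > 0, set t_i = i·k and σ_i = min(1, t_i)·e^{2α t_i}. Let x_0, x_1, …, x_n be nonnegative real numbers. Then ∑_{i=1}^{n} σ_i·(x_i − x_{i−1}) ≥ σ_n·x_n − σ_1·x_0 − (1 + 2α)·e^{2αk}·k·∑_{i=1}^{n−1} e^{2α t_i}·x_i. -/
/-- Weighted telescoping inequality for the discrete weight
`σ_i = min(1, t_i) e^{2α t_i}`, with `t_i = i k`. -/
theorem weighted_telescoping_inequality
    (α k : ℝ) (hα : 0 < α) (hk : 0 < k)
    (σ : ℕ → ℝ)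
    (hσ : ∀ i : ℕ, σ i = min 1 ((i : ℝ) * k) * Real.exp (2 * α * ((i : ℝ) * k)))
    (n : ℕ) (hn : 1 ≤ n) (x : ℕ → ℝ) (hx : ∀ i, 0 ≤ x i) :
    σ n * x n - σ 1 * x 0
        - (1 + 2 * α) * Real.exp (2 * α * k) * k *
            ∑ i ∈ Finset.Icc 1 (n - 1), Real.exp (2 * α * ((i : ℝ) * k)) * x i ≤
      ∑ i ∈ Finset.Icc 1 n, σ i * (x i - x (i - 1)) := by
  have hE1 : (1:ℝ) ≤ Real.exp (2*α*k) := Real.one_le_exp (by positivity)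
  have hEk : Real.exp (2*α*k) - 1 ≤ 2*α*k * Real.exp (2*α*k) := by
    have h := Real.add_one_le_exp (-(2*α*k))
    have hmul : Real.exp (-(2*α*k)) * Real.exp (2*α*k) = 1 := by
      rw [← Real.exp_add]; simp
    nlinarith [Real.exp_pos (2*α*k)]
  have hdiff : ∀ i : ℕ, 1 ≤ i →
      σ (i+1) - σ i ≤ (1 + 2*α) * Real.exp (2*α*k) * k * Real.exp (2*α*((i:ℝ)*k)) := by
    intro i hi
    have ht : ((i+1:ℕ):ℝ) * k = (i:ℝ)*k + k := by push_cast; ring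
    rw [hσ (i+1), hσ i, ht]
    set t := (i:ℝ)*k with htdef
    have hm' : min 1 (t + k) ≤ min 1 t + k := by
      rcases le_total t 1 with h | h
      · calc min 1 (t+k) ≤ t + k := min_le_right _ _
          _ = min 1 t + k := by rw [min_eq_right h]
      · calc min 1 (t+k) ≤ 1 := min_le_left _ _
          _ ≤ min 1 t + k := by rw [min_eq_left h]; linarith
    have hexp : Real.exp (2*α*(t+k)) = Real.exp (2*α*t) * Real.exp (2*α*k) := by
      rw [← Real.exp_add]; ring_nf
    have hmle : min 1 t ≤ 1 := min_le_left _ _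
    have hm0 : 0 ≤ min 1 t := by
      apply le_min (by norm_num)
      positivity
    have hep : 0 < Real.exp (2*α*t) := Real.exp_pos _
    rw [hexp]
    nlinarith [mul_nonneg (mul_nonneg (sub_nonneg.2 hm') hep.le)
        (Real.exp_pos (2*α*k)).le,
      mul_nonneg (mul_nonneg (sub_nonneg.2 hmle) hep.le) (by linarith : (0:ℝ) ≤ Real.exp (2*α*k) - 1),
      mul_nonneg hep.le (by linarith : (0:ℝ) ≤ 2*α*k * Real.exp (2*α*k) - (Real.exp (2*α*k) - 1))]
  induction n, hn using Nat.le_induction with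
  | base =>
      simp only [Nat.sub_self, Finset.Icc_self, Finset.Icc_eq_empty_of_lt (by norm_num : (1:ℕ) > 0),
        Finset.sum_empty, Finset.sum_singleton]
      simp
      ring_nf
      linarith
  | succ n hn ih =>
      obtain ⟨m, rfl⟩ : ∃ m, n = m + 1 := ⟨n - 1, (Nat.succ_pred_eq_of_pos hn).symm⟩
      rw [Finset.sum_Icc_succ_top (by omega : 1 ≤ m+1+1)]
      have h1 : m + 1 + 1 - 1 = m + 1 := by omega
      rw [h1, Finset.sum_Icc_succ_top (by omega : 1 ≤ m+1)]
      have h2 : m + 1 - 1 = m := rfl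
      rw [h2] at ih
      have hd := hdiff (m+1) (by omega)
      have hxm := hx (m+1)
      have hC : 0 ≤ (1 + 2*α) * Real.exp (2*α*k) * k := by positivity
      have key : (σ (m+1+1) - σ (m+1)) * x (m+1)
          ≤ (1 + 2*α) * Real.exp (2*α*k) * k * Real.exp (2*α*(((m+1:ℕ):ℝ)*k)) * x (m+1) :=
        mul_le_mul_of_nonneg_right hd hxm
      nlinarith [ih]
end

section
/- Let H be a real inner product space, a : H × H → ℝ a symmetric positive semidefinite bilinear form with a(v,v) ≥ λ₁·‖v‖² for all v ∈ H for some λ₁ > 0, and b : H × H × H → ℝ a trilinear map with b(u,v,v) = 0 for all u, v ∈ H. Let μ, γ, δ, k > 0, set t_i = i·k, let f^1, …, f^N ∈ H with ‖f^n‖ ≤ F for all n, and let U^0, …, U^N ∈ H satisfy, for every 1 ≤ n ≤ N and every φ ∈ H, ⟨(U^n − U^{n−1})/k, φ⟩ + μ·a(U^n, φ) + a( k·∑_{j=1}^{n} γ·e^{−δ(t_n−t_j)}·U^j, φ ) + b(U^n, U^n, φ) = ⟨f^n, φ⟩. Then for every α with 0 < α < min{δ, μλ₁/2} and e^{αk}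 ≤ 1 + (μλ₁/2)·k, and every 1 ≤ n ≤ N: ‖U^n‖² + (μ/2)·e^{−αk}·e^{−2α t_n}·k·∑_{i=1}^{n} e^{2α t_i}·a(U^i, U^i) ≤ e^{−2α t_n}·‖U^0‖² + (e^{αk}/(α·μ·λ₁))·F². -/
open scoped RealInnerProductSpace
open Finset

/-!
Testing the scheme with `U n` kills the convection term and leaves
`‖Uₙ‖² + k (μ a(Uₙ, Uₙ) + a(qₙ, Uₙ)) ≤ ‖Uₙ₋₁‖ ‖Uₙ‖ + k F ‖Uₙ‖`.
With `x = e^{αk}`, the condition `x ≤ 1 + μλ₁k/2` lets half of the dissipation pay for the growth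
from `‖Uₙ₋₁‖²` to `x² ‖Uₙ‖²`, and Young's inequality absorbs the source. The resulting one-step
inequality is multiplied by `e^{2α tₙ₋₁}` and telescoped. After this weighting the memory kernel
becomes `(e^{(α-δ)k})^{i-j}`, a kernel of positive type since `α < δ`, so the memory terms sum to
something nonnegative; the weighted sources form a geometric sum.
-/

lemma exp_mul_natCast_mul (c k : ℝ) (m : ℕ) :
    Real.exp (c * (m * k)) = Real.exp (c * k) ^ m := by
  rw [← Real.exp_nat_mul]; ring_nf

lemma exp_mul_natCast_mul_sub {i j : ℕ} (hji : j ≤ i) (c k : ℝ) :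
    Real.exp (c * (i * k - j * k)) = Real.exp (c * k) ^ (i - j) := by
  rw [← exp_mul_natCast_mul, Nat.cast_sub hji, sub_mul]

theorem pow_mul_add_sum_le_of_step {z s : ℝ} {e d : ℕ → ℝ} (hz : 0 ≤ z) :
    ∀ n : ℕ, (∀ i ∈ Icc 1 n, z * (e i + d i) ≤ e (i - 1) + z * s) →
      z ^ n * e n + ∑ i ∈ Icc 1 n, z ^ i * d i ≤ e 0 + s * ∑ i ∈ Icc 1 n, z ^ i
  | 0, _ => by simp
  | n + 1, h => by
    have ih := pow_mul_add_sum_le_of_step hz n fun i hi =>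
      h i (Icc_subset_Icc_right n.le_succ hi)
    have last := mul_le_mul_of_nonneg_left (h (n + 1) (by simp)) (pow_nonneg hz n)
    rw [Nat.add_sub_cancel] at last
    rw [sum_Icc_succ_top (by omega), sum_Icc_succ_top (by omega), pow_succ]
    linear_combination ih + last

theorem mul_sum_Icc_pow_le {c z : ℝ} (hc : 0 ≤ c) (hcz : 1 + c ≤ z) :
    ∀ n : ℕ, c * ∑ i ∈ Icc 1 n, z ^ i ≤ z ^ (n + 1)
  | 0 => by simp; linarith
  | n + 1 => by
    have ih := mul_sum_Icc_pow_le hc hcz n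
    have hz := mul_le_mul_of_nonneg_right hcz (pow_nonneg (by linarith) (n + 1) : 0 ≤ z ^ (n + 1))
    rw [sum_Icc_succ_top (by omega), pow_succ _ (n + 1)]
    linear_combination ih + hz

section PositiveKernel

variable {E : Type*} [AddCommGroup E] [Module ℝ E] (B : E →ₗ[ℝ] E →ₗ[ℝ] ℝ)

lemma apply_self_sub_le_two_mul_apply_sub_smul (hsymm : ∀ u v, B u v = B v u)
    (hpos : ∀ v, 0 ≤ B v v) {r : ℝ} (hr0 : 0 ≤ r) (hr1 : r ≤ 1) (u v : E) :
    B v v - B u u ≤ 2 * B (v - r • u) v := by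
  have h := hpos (u - v)
  simp only [map_sub, map_smul, LinearMap.sub_apply, LinearMap.smul_apply, smul_eq_mul,
    hsymm v u] at h ⊢
  nlinarith [hpos u, hpos v]

lemma sum_apply_sum_pow_smul_nonneg (hsymm : ∀ u v, B u v = B v u) (hpos : ∀ v, 0 ≤ B v v)
    {r : ℝ} (hr0 : 0 ≤ r) (hr1 : r ≤ 1) (V : ℕ → E) (n : ℕ) :
    0 ≤ ∑ i ∈ Icc 1 n, B (V i) (∑ j ∈ Icc 1 i, r ^ (i - j) • V j) := by
  set S : ℕ → E := fun i => ∑ j ∈ Icc 1 i, r ^ (i - j) • V j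
  have hS : ∀ i, V (i + 1) = S (i + 1) - r • S i := by
    intro i
    simp only [S, sum_Icc_succ_top (Nat.le_add_left 1 i), Nat.sub_self, pow_zero, one_smul,
      smul_sum, smul_smul]
    rw [add_sub_right_comm, ← sum_sub_distrib, sum_eq_zero, zero_add]
    intro j hj
    rw [Nat.sub_add_comm (mem_Icc.mp hj).2, pow_succ', sub_self]
  -- Each term is at least half the increment of `B (S i) (S i)`, so the sum telescopes.
  suffices B (S n) (S n) ≤ 2 * ∑ i ∈ Icc 1 n, B (V i) (S i) by linarith [hpos (S n)]
  induction n with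
  | zero => simp [S]
  | succ n ih =>
    rw [sum_Icc_succ_top (by omega), hS n]
    linarith [apply_self_sub_le_two_mul_apply_sub_smul B hsymm hpos hr0 hr1 (S n) (S (n + 1))]

lemma sum_pow_mul_apply_sum_pow_smul_nonneg (hsymm : ∀ u v, B u v = B v u)
    (hpos : ∀ v, 0 ≤ B v v) {x ρ : ℝ} (hx : 0 ≤ x) (hρ : 0 ≤ ρ) (hxρ : x * ρ ≤ 1)
    (U : ℕ → E) (n : ℕ) :
    0 ≤ ∑ i ∈ Icc 1 n, (x ^ 2) ^ i * B (∑ j ∈ Icc 1 i, ρ ^ (i - j) • U j) (U i) := by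
  -- `(x ^ 2) ^ i * ρ ^ (i - j) = x ^ i * (x * ρ) ^ (i - j) * x ^ j`
  convert sum_apply_sum_pow_smul_nonneg B hsymm hpos (mul_nonneg hx hρ) hxρ
    (fun j => x ^ j • U j) n using 2 with i
  simp only [map_sum, map_smul, LinearMap.sum_apply, LinearMap.smul_apply, smul_eq_mul, mul_sum]
  refine sum_congr rfl fun j hj => ?_
  have split : (x ^ 2) ^ i = x ^ (i - j) * x ^ j * x ^ i := by
    rw [pow_sub_mul_pow x (mem_Icc.mp hj).2, ← pow_mul, ← pow_add, two_mul]
  rw [hsymm (U j), split, mul_pow]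
  ring

end PositiveKernel

lemma smul_sum_exp_kernel_eq {E : Type*} [AddCommGroup E] [Module ℝ E] (k γ δ : ℝ)
    (U : ℕ → E) (i : ℕ) :
    k • ∑ j ∈ Icc 1 i, (γ * Real.exp (-δ * (i * k - j * k))) • U j =
      (k * γ) • ∑ j ∈ Icc 1 i, Real.exp (-δ * k) ^ (i - j) • U j := by
  rw [mul_smul, smul_sum (r := γ)]
  refine congrArg (k • ·) (sum_congr rfl fun j hj => ?_)
  rw [mul_smul, exp_mul_natCast_mul_sub (mem_Icc.mp hj).2]

lemma norm_sq_add_mul_le_of_inner_eq {H : Type*} [NormedAddCommGroup H]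
    [InnerProductSpace ℝ H] {u v g : H} {k F p : ℝ} (hk : 0 < k) (hg : ‖g‖ ≤ F)
    (h : ⟪(1 / k) • (u - v), u⟫ + p = ⟪g, u⟫) :
    ‖u‖ ^ 2 + k * p ≤ ‖v‖ * ‖u‖ + k * (F * ‖u‖) := by
  rw [real_inner_smul_left, inner_sub_left, real_inner_self_eq_norm_sq] at h
  have hvu : ⟪v, u⟫ ≤ ‖v‖ * ‖u‖ := real_inner_le_norm v u
  have hgu : ⟪g, u⟫ ≤ F * ‖u‖ :=
    (real_inner_le_norm g u).trans (mul_le_mul_of_nonneg_right hg (norm_nonneg u))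
  have h' : ‖u‖ ^ 2 - ⟪v, u⟫ + k * p = k * ⟪g, u⟫ := by
    field_simp at h; linarith
  nlinarith

lemma weighted_energy_step {μ L k F x X Y A P : ℝ} (hμ : 0 < μ) (hL : 0 < L) (hk : 0 ≤ k)
    (hx : 0 < x) (hxk : x ≤ 1 + μ * L / 2 * k) (hA : L * Y ^ 2 ≤ A)
    (h : Y ^ 2 + k * (μ * A + P) ≤ X * Y + k * (F * Y)) :
    x ^ 2 * (Y ^ 2 + x⁻¹ * k * (μ / 2 * A + 2 * P)) ≤
      X ^ 2 + x ^ 2 * (x⁻¹ * k * (2 * F ^ 2 / (μ * L))) := by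
  have young : 2 * F * Y ≤ μ * L / 2 * Y ^ 2 + 2 * F ^ 2 / (μ * L) := by
    have hc : 0 < μ * L := by positivity
    generalize μ * L = c at hc ⊢
    have hsq : 0 ≤ (c * Y - 2 * F) ^ 2 / (2 * c) := by positivity
    have e : (c * Y - 2 * F) ^ 2 / (2 * c) = c / 2 * Y ^ 2 + 2 * F ^ 2 / c - 2 * F * Y := by
      field_simp; ring
    linarith
  have damping : 2 * (x - 1) * Y ^ 2 ≤ k * μ * A := by
    nlinarith [mul_le_mul_of_nonneg_right (show x - 1 ≤ μ * L / 2 * k by linarith) (sq_nonneg Y),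
      mul_le_mul_of_nonneg_left hA (mul_nonneg hk hμ.le)]
  have cross : 2 * x * (X * Y) ≤ X ^ 2 + x ^ 2 * Y ^ 2 := by nlinarith [sq_nonneg (X - x * Y)]
  have h₁ := mul_le_mul_of_nonneg_left h (by positivity : (0 : ℝ) ≤ 2 * x)
  have h₂ := mul_le_mul_of_nonneg_left young (by positivity : (0 : ℝ) ≤ x * k)
  have h₃ := mul_le_mul_of_nonneg_left damping hx.le
  have h₄ := mul_le_mul_of_nonneg_left hA (by positivity : (0 : ℝ) ≤ x * k * μ)
  have expand : ∀ t, x ^ 2 * (x⁻¹ * k * t) = x * k * t := fun t => by field_simp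
  rw [mul_add, expand, expand]
  linarith

theorem weighted_energy_bound {μ L k F α x : ℝ} (hμ : 0 < μ) (hL : 0 < L) (hk : 0 < k)
    (hα : 0 < α) (hx : 1 + α * k ≤ x) (hxk : x ≤ 1 + μ * L / 2 * k) {Y A P : ℕ → ℝ} {n : ℕ}
    (hA : ∀ i ∈ Icc 1 n, L * Y i ^ 2 ≤ A i)
    (hstep : ∀ i ∈ Icc 1 n, Y i ^ 2 + k * (μ * A i + P i) ≤ Y (i - 1) * Y i + k * (F * Y i))
    (hP : 0 ≤ ∑ i ∈ Icc 1 n, (x ^ 2) ^ i * P i) :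
    Y n ^ 2 + μ / 2 * x⁻¹ * ((x ^ 2) ^ n)⁻¹ * k * ∑ i ∈ Icc 1 n, (x ^ 2) ^ i * A i ≤
      ((x ^ 2) ^ n)⁻¹ * Y 0 ^ 2 + x / (α * μ * L) * F ^ 2 := by
  have hx0 : 0 < x := by nlinarith
  have htel := pow_mul_add_sum_le_of_step (z := x ^ 2) (e := fun i => Y i ^ 2) (sq_nonneg x) n
    fun i hi => weighted_energy_step hμ hL hk.le hx0 hxk (hA i hi) (hstep i hi)
  have hsplit : ∑ i ∈ Icc 1 n, (x ^ 2) ^ i * (x⁻¹ * k * (μ / 2 * A i + 2 * P i)) =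
      μ / 2 * x⁻¹ * k * ∑ i ∈ Icc 1 n, (x ^ 2) ^ i * A i +
        2 * x⁻¹ * k * ∑ i ∈ Icc 1 n, (x ^ 2) ^ i * P i := by
    rw [mul_sum, mul_sum, ← sum_add_distrib]
    exact sum_congr rfl fun i _ => by ring
  have hgeom := mul_sum_Icc_pow_le (c := 2 * α * k) (z := x ^ 2) (by positivity)
    (by nlinarith [pow_le_pow_left₀ (by positivity) hx 2, sq_nonneg (α * k)]) n
  have hsource : x⁻¹ * k * (2 * F ^ 2 / (μ * L)) * ∑ i ∈ Icc 1 n, (x ^ 2) ^ i ≤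
      (x ^ 2) ^ n * (x / (α * μ * L) * F ^ 2) :=
    calc _ = x⁻¹ * F ^ 2 / (α * μ * L) * (2 * α * k * ∑ i ∈ Icc 1 n, (x ^ 2) ^ i) := by
          field_simp
      _ ≤ x⁻¹ * F ^ 2 / (α * μ * L) * (x ^ 2) ^ (n + 1) := by gcongr
      _ = _ := by field_simp; ring
  have hmem : 0 ≤ 2 * x⁻¹ * k * ∑ i ∈ Icc 1 n, (x ^ 2) ^ i * P i := by positivity
  rw [hsplit] at htel
  have hzn : 0 < (x ^ 2) ^ n := by positivity
  calc _ = ((x ^ 2) ^ n)⁻¹ * ((x ^ 2) ^ n * Y n ^ 2 +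
        μ / 2 * x⁻¹ * k * ∑ i ∈ Icc 1 n, (x ^ 2) ^ i * A i) := by field_simp
    _ ≤ ((x ^ 2) ^ n)⁻¹ * (Y 0 ^ 2 + (x ^ 2) ^ n * (x / (α * μ * L) * F ^ 2)) :=
        mul_le_mul_of_nonneg_left (by linarith) (by positivity)
    _ = _ := by field_simp

theorem backward_euler_stability_general
    {H : Type*} [NormedAddCommGroup H] [InnerProductSpace ℝ H]
    (a : H →ₗ[ℝ] H →ₗ[ℝ] ℝ) (lam₁ : ℝ) (hlam₁ : 0 < lam₁)
    (hsymm : ∀ u v : H, a u v = a v u)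
    (hcoer : ∀ v : H, lam₁ * ‖v‖ ^ 2 ≤ a v v)
    (b : H →ₗ[ℝ] H →ₗ[ℝ] H →ₗ[ℝ] ℝ)
    (hb : ∀ u v : H, b u v v = 0)
    (μ γ δ k F : ℝ) (hμ : 0 < μ) (hγ : 0 < γ) (hk : 0 < k)
    (N : ℕ) (f : ℕ → H) (hf : ∀ n : ℕ, 1 ≤ n → n ≤ N → ‖f n‖ ≤ F)
    (U : ℕ → H)
    (scheme : ∀ n : ℕ, 1 ≤ n → n ≤ N → ∀ φ : H,
      ⟪(1 / k) • (U n - U (n - 1)), φ⟫ + μ * a (U n) φ +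
        a (k • ∑ j ∈ Finset.Icc 1 n,
            (γ * Real.exp (-δ * ((n : ℝ) * k - (j : ℝ) * k))) • U j) φ +
        b (U n) (U n) φ = ⟪f n, φ⟫) :
    ∀ α : ℝ, 0 < α → α < min δ (μ * lam₁ / 2) →
      Real.exp (α * k) ≤ 1 + (μ * lam₁ / 2) * k →
      ∀ n : ℕ, 1 ≤ n → n ≤ N →
        ‖U n‖ ^ 2 + (μ / 2) * Real.exp (-α * k) * Real.exp (-2 * α * ((n : ℝ) * k)) *
            k * ∑ i ∈ Finset.Icc 1 n,
              Real.exp (2 * α * ((i : ℝ) * k)) * a (U i) (U i) ≤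
          Real.exp (-2 * α * ((n : ℝ) * k)) * ‖U 0‖ ^ 2 +
            (Real.exp (α * k) / (α * μ * lam₁)) * F ^ 2 := by
  intro α hα hαmin hαk n _ hnN
  set x := Real.exp (α * k)
  have hexp_sum : ∀ i : ℕ, Real.exp (2 * α * (i * k)) = (x ^ 2) ^ i := fun i => by
    rw [exp_mul_natCast_mul, sq, ← Real.exp_add]; ring_nf
  have hexp_n : Real.exp (-2 * α * (n * k)) = ((x ^ 2) ^ n)⁻¹ := by
    rw [← hexp_sum, ← Real.exp_neg]; ring_nf
  have hxinv : Real.exp (-α * k) = x⁻¹ := by rw [neg_mul, Real.exp_neg]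
  have hxρ : x * Real.exp (-δ * k) ≤ 1 := by
    rw [← Real.exp_add, Real.exp_le_one_iff]
    nlinarith [hαmin.trans_le (min_le_left _ _)]
  have hmem : 0 ≤ ∑ i ∈ Icc 1 n, (x ^ 2) ^ i *
      a (k • ∑ j ∈ Icc 1 i, (γ * Real.exp (-δ * (i * k - j * k))) • U j) (U i) := by
    simp only [smul_sum_exp_kernel_eq, map_smul, LinearMap.smul_apply, smul_eq_mul,
      mul_left_comm _ (k * γ), ← mul_sum]
    have hpos (v : H) : 0 ≤ a v v := (by positivity : 0 ≤ lam₁ * ‖v‖ ^ 2).trans (hcoer v)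
    exact mul_nonneg (by positivity) (sum_pow_mul_apply_sum_pow_smul_nonneg a hsymm hpos
      (Real.exp_pos _).le (Real.exp_pos _).le hxρ U n)
  have key := weighted_energy_bound (Y := fun i => ‖U i‖) hμ hlam₁ hk hα
    (by linarith [Real.add_one_le_exp (α * k)]) hαk (fun i _ => hcoer (U i)) (fun i hi => by
      obtain ⟨hi1, hin⟩ := mem_Icc.mp hi
      have h := scheme i hi1 (hin.trans hnN) (U i)
      rw [hb, add_zero, add_assoc] at h
      exact norm_sq_add_mul_le_of_inner_eq hk (hf i hi1 (hin.trans hnN)) h) hmem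
  simpa only [hexp_sum, hexp_n, hxinv] using key

/-- Abstract form of the stability Lemma 4.1 for the backward Euler scheme
applied to the Oldroyd model. -/
theorem backward_euler_stability
    {H : Type*} [NormedAddCommGroup H] [InnerProductSpace ℝ H]
    (a : H →ₗ[ℝ] H →ₗ[ℝ] ℝ) (lam₁ : ℝ) (hlam₁ : 0 < lam₁)
    (hsymm : ∀ u v : H, a u v = a v u)
    (hcoer : ∀ v : H, lam₁ * ‖v‖ ^ 2 ≤ a v v)
    (b : H →ₗ[ℝ] H →ₗ[ℝ] H →ₗ[ℝ] ℝ)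
    (hb : ∀ u v : H, b u v v = 0)
    (μ γ δ k F : ℝ) (hμ : 0 < μ) (hγ : 0 < γ) (hδ : 0 < δ) (hk : 0 < k)
    (N : ℕ) (f : ℕ → H) (hf : ∀ n : ℕ, 1 ≤ n → n ≤ N → ‖f n‖ ≤ F)
    (U : ℕ → H)
    (scheme : ∀ n : ℕ, 1 ≤ n → n ≤ N → ∀ φ : H,
      ⟪(1 / k) • (U n - U (n - 1)), φ⟫ + μ * a (U n) φ +
        a (k • ∑ j ∈ Finset.Icc 1 n,
            (γ * Real.exp (-δ * ((n : ℝ) * k - (j : ℝ) * k))) • U j) φ +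
        b (U n) (U n) φ = ⟪f n, φ⟫) :
    ∀ α : ℝ, 0 < α → α < min δ (μ * lam₁ / 2) →
      Real.exp (α * k) ≤ 1 + (μ * lam₁ / 2) * k →
      ∀ n : ℕ, 1 ≤ n → n ≤ N →
        ‖U n‖ ^ 2 + (μ / 2) * Real.exp (-α * k) * Real.exp (-2 * α * ((n : ℝ) * k)) *
            k * ∑ i ∈ Finset.Icc 1 n,
              Real.exp (2 * α * ((i : ℝ) * k)) * a (U i) (U i) ≤
          Real.exp (-2 * α * ((n : ℝ) * k)) * ‖U 0‖ ^ 2 +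
            (Real.exp (α * k) / (α * μ * lam₁)) * F ^ 2 :=
  backward_euler_stability_general a lam₁ hlam₁ hsymm hcoer b hb μ γ δ k F hμ hγ hk N f hf U scheme
end

section
/- Let H be a real inner product space, a : H × H → ℝ a symmetric positive semidefinite bilinear form with a(v,v) ≥ λ₁·‖v‖² for all v ∈ H for some λ₁ > 0, and b : H × H × H → ℝ a trilinear map with b(u,v,v) = 0 for all u, v ∈ H. Let μ, γ, δ, k > 0, set t_i = i·k, let f^1, …, f^N ∈ H with ‖f^n‖ ≤ F for all n, and let U^0, …, U^N ∈ H satisfy, for every 1 ≤ n ≤ N and every φ ∈ H, ⟨(U^n − U^{n−1})/k, φ⟩ + μ·a(U^n, φ) + a( k·∑_{j=1}^{n} γ·e^{−δ(t_n−t_j)}·U^j, φ ) + b(U^n, U^n, φ) = ⟨f^n, φ⟩. Define U^n_β = k·∑_{j=1}^{n} γ·e^{−δ(t_n−t_j)}·U^j with U^0_β = 0. Then for every α with 0 < α ≤ δ and e^{αk} ≤ 1 + (μλ₁/2)·k, and every 1 ≤ n ≤ N: ‖U^n‖² + (e^{−δk}/γ)·a(U^n_β, U^n_β) ≤ e^{−α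 t_n}·‖U^0‖² + ((1 − e^{−α t_n})/(α·μ·λ₁))·F². -/
open scoped RealInnerProductSpace

/-!
Testing the scheme with `Uⁿ` kills the convection term. The memory term satisfies
`Uⁿ_β = kγ Uⁿ + e^{-δk} Uⁿ⁻¹_β`, so Cauchy–Schwarz for `a` gives
`2kγ a(Uⁿ_β, Uⁿ) ≥ a(Uⁿ_β, Uⁿ_β) - e^{-2δk} a(Uⁿ⁻¹_β, Uⁿ⁻¹_β)`; together with coercivity and
Young's inequality for the forcing this yields `e^{αk} Eⁿ ≤ Eⁿ⁻¹ + k F² / (μλ₁)` for the energy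
`Eⁿ = ‖Uⁿ‖² + (e^{-δk}/γ) a(Uⁿ_β, Uⁿ_β)`. Since `1 + αk ≤ e^{αk}`, the quantity
`α Eⁿ - F² / (μλ₁)` then decays geometrically with ratio `e^{-αk}`.
-/

section BilinearForm

variable {E : Type*} [AddCommGroup E] [Module ℝ E] (a : E →ₗ[ℝ] E →ₗ[ℝ] ℝ)

theorem two_mul_le_add_of_symm_of_nonneg (hsymm : ∀ u v, a u v = a v u)
    (hnonneg : ∀ v, 0 ≤ a v v) (x y : E) : 2 * a x y ≤ a x x + a y y := by
  have h := hnonneg (x - y)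
  simp only [map_sub, LinearMap.sub_apply, hsymm y x] at h
  linarith

theorem sub_sq_mul_le_two_mul_sub_smul (hsymm : ∀ u v, a u v = a v u)
    (hnonneg : ∀ v, 0 ≤ a v v) (w w₀ : E) (c : ℝ) :
    a w w - c ^ 2 * a w₀ w₀ ≤ 2 * a w (w - c • w₀) := by
  have h := two_mul_le_add_of_symm_of_nonneg a hsymm hnonneg w (c • w₀)
  simp only [map_sub, map_smul, LinearMap.smul_apply, smul_eq_mul] at h ⊢
  linarith

end BilinearForm

section MemoryTerm

variable {E : Type*} [AddCommGroup E] [Module ℝ E] (k γ δ : ℝ) (U : ℕ → E)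

noncomputable def memoryTerm (n : ℕ) : E :=
  k • ∑ j ∈ Finset.Icc 1 n, (γ * Real.exp (-δ * ((n : ℝ) * k - (j : ℝ) * k))) • U j

@[simp]
theorem memoryTerm_zero : memoryTerm k γ δ U 0 = 0 := by
  simp [memoryTerm]

theorem memoryTerm_succ (n : ℕ) :
    memoryTerm k γ δ U (n + 1) =
      (k * γ) • U (n + 1) + Real.exp (-δ * k) • memoryTerm k γ δ U n := by
  have kernel_succ : ∀ j : ℕ, Real.exp (-δ * (((n + 1 : ℕ) : ℝ) * k - j * k)) =
      Real.exp (-δ * k) * Real.exp (-δ * ((n : ℝ) * k - j * k)) := by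
    intro j
    rw [← Real.exp_add]
    push_cast
    ring_nf
  rw [memoryTerm, memoryTerm, Finset.sum_Icc_succ_top (Nat.le_add_left 1 n), smul_add, add_comm]
  simp only [kernel_succ, sub_self, mul_zero, Real.exp_zero, mul_one, smul_smul, Finset.smul_sum]
  congr 1
  exact Finset.sum_congr rfl fun j _ => by congr 1; ring

end MemoryTerm

section EnergyStep

variable {H : Type*} [NormedAddCommGroup H] [InnerProductSpace ℝ H]

theorem norm_sq_sub_norm_sq_le_two_mul_inner (u v : H) :
    ‖u‖ ^ 2 - ‖v‖ ^ 2 ≤ 2 * ⟪u - v, u⟫ := by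
  rw [inner_sub_left, real_inner_self_eq_norm_sq, real_inner_comm]
  linarith [norm_sub_sq_real u v, sq_nonneg ‖u - v‖]

theorem energy_dissipation (a : H →ₗ[ℝ] H →ₗ[ℝ] ℝ) {lam₁ μ γ k c F : ℝ}
    (hsymm : ∀ u v, a u v = a v u) (hcoer : ∀ v, lam₁ * ‖v‖ ^ 2 ≤ a v v) (hlam₁ : 0 < lam₁)
    (hμ : 0 < μ) (hγ : 0 < γ) (hk : 0 < k) {u₀ u w₀ w f : H}
    (hw : w = (k * γ) • u + c • w₀) (hf : ‖f‖ ≤ F)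
    (heq : ⟪(1 / k) • (u - u₀), u⟫ + μ * a u u + a w u = ⟪f, u⟫) :
    (1 + k * (μ * lam₁)) * ‖u‖ ^ 2 + a w w / γ ≤
      ‖u₀‖ ^ 2 + c ^ 2 * a w₀ w₀ / γ + k * (F ^ 2 / (μ * lam₁)) := by
  have hnonneg : ∀ v, 0 ≤ a v v := fun v => (by positivity : 0 ≤ lam₁ * ‖v‖ ^ 2).trans (hcoer v)
  have htested : 2 * ⟪u - u₀, u⟫ + 2 * k * μ * a u u + 2 * k * a w u = 2 * k * ⟪f, u⟫ := by
    rw [real_inner_smul_left] at heq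
    field_simp at heq
    linarith
  have hkinetic := norm_sq_sub_norm_sq_le_two_mul_inner u u₀
  have hviscous := mul_le_mul_of_nonneg_left (hcoer u) (by positivity : 0 ≤ 2 * k * μ)
  have hmemory : a w w / γ - c ^ 2 * a w₀ w₀ / γ ≤ 2 * k * a w u := by
    have h := sub_sq_mul_le_two_mul_sub_smul a hsymm hnonneg w w₀ c
    rw [hw, add_sub_cancel_right, map_smul, smul_eq_mul, ← hw] at h
    rw [← sub_div, div_le_iff₀ hγ]
    linarith
  have hforce : 2 * k * ⟪f, u⟫ ≤ 2 * k * (F * ‖u‖) :=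
    mul_le_mul_of_nonneg_left ((real_inner_le_norm f u).trans
      (mul_le_mul_of_nonneg_right hf (norm_nonneg u))) (by positivity)
  have hyoung : 2 * F * ‖u‖ ≤ μ * lam₁ * ‖u‖ ^ 2 + F ^ 2 / (μ * lam₁) := by
    have hsq : μ * lam₁ * ‖u‖ ^ 2 + F ^ 2 / (μ * lam₁) - 2 * F * ‖u‖
        = (μ * lam₁ * ‖u‖ - F) ^ 2 / (μ * lam₁) := by field_simp; ring
    rw [← sub_nonneg, hsq]
    positivity
  linarith [mul_le_mul_of_nonneg_left hyoung hk.le]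

theorem energy_step (a : H →ₗ[ℝ] H →ₗ[ℝ] ℝ) {lam₁ μ γ k c e F : ℝ}
    (hsymm : ∀ u v, a u v = a v u) (hcoer : ∀ v, lam₁ * ‖v‖ ^ 2 ≤ a v v) (hlam₁ : 0 < lam₁)
    (hμ : 0 < μ) (hγ : 0 < γ) (hk : 0 < k) (hc0 : 0 ≤ c) (hc1 : c ≤ 1) (hec : e * c ≤ 1)
    (hek : e ≤ 1 + k * (μ * lam₁)) {u₀ u w₀ w f : H}
    (hw : w = (k * γ) • u + c • w₀) (hf : ‖f‖ ≤ F)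
    (heq : ⟪(1 / k) • (u - u₀), u⟫ + μ * a u u + a w u = ⟪f, u⟫) :
    e * (‖u‖ ^ 2 + c / γ * a w w) ≤
      ‖u₀‖ ^ 2 + c / γ * a w₀ w₀ + k * (F ^ 2 / (μ * lam₁)) := by
  have hnonneg : ∀ v, 0 ≤ a v v / γ := fun v =>
    div_nonneg ((by positivity : 0 ≤ lam₁ * ‖v‖ ^ 2).trans (hcoer v)) hγ.le
  have hdiss := energy_dissipation a hsymm hcoer hlam₁ hμ hγ hk hw hf heq
  have hu := mul_le_mul_of_nonneg_right hek (sq_nonneg ‖u‖)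
  have hw := mul_le_mul_of_nonneg_right hec (hnonneg w)
  have hw₀ := mul_le_mul_of_nonneg_right (pow_le_of_le_one hc0 hc1 two_ne_zero) (hnonneg w₀)
  calc e * (‖u‖ ^ 2 + c / γ * a w w) = e * ‖u‖ ^ 2 + e * c * (a w w / γ) := by ring
    _ ≤ (1 + k * (μ * lam₁)) * ‖u‖ ^ 2 + a w w / γ := by linarith
    _ ≤ ‖u₀‖ ^ 2 + c ^ 2 * a w₀ w₀ / γ + k * (F ^ 2 / (μ * lam₁)) := hdiss
    _ ≤ ‖u₀‖ ^ 2 + c * (a w₀ w₀ / γ) + k * (F ^ 2 / (μ * lam₁)) := by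
      rw [mul_div_assoc]; linarith
    _ = ‖u₀‖ ^ 2 + c / γ * a w₀ w₀ + k * (F ^ 2 / (μ * lam₁)) := by ring

end EnergyStep

theorem le_exp_neg_mul_add_of_exp_mul_le {E : ℕ → ℝ} {α k G : ℝ} {N : ℕ} (hα : 0 < α)
    (hG : 0 ≤ G) (hrec : ∀ m, m + 1 ≤ N → Real.exp (α * k) * E (m + 1) ≤ E m + k * G)
    {n : ℕ} (hn : n ≤ N) :
    E n ≤ Real.exp (-α * (n * k)) * E 0 + (1 - Real.exp (-α * (n * k))) / α * G := by
  set ρ := Real.exp (-α * k) with hρ_def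
  have hρ0 : 0 ≤ ρ := (Real.exp_pos _).le
  have hρ_inv : ρ * Real.exp (α * k) = 1 := by rw [← Real.exp_add]; simp
  have hρ : ρ * (1 + α * k) ≤ 1 :=
    hρ_inv ▸ mul_le_mul_of_nonneg_left (by linarith [Real.add_one_le_exp (α * k)]) hρ0
  have hdecay : α * E n - G ≤ ρ ^ n * (α * E 0 - G) := by
    refine le_geom (u := fun m => α * E m - G) hρ0 n fun m hm => ?_
    have h := mul_le_mul_of_nonneg_left (hrec m (by omega)) hρ0
    rw [← mul_assoc, hρ_inv, one_mul] at h
    linarith [mul_le_mul_of_nonneg_right hρ hG, mul_le_mul_of_nonneg_left h hα.le]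
  rw [show -α * (n * k) = n * (-α * k) by ring, Real.exp_nat_mul, ← hρ_def,
    ← mul_le_mul_iff_right₀ hα]
  field_simp
  linarith

theorem backward_euler_uniform_estimate_general
    {H : Type*} [NormedAddCommGroup H] [InnerProductSpace ℝ H]
    (a : H →ₗ[ℝ] H →ₗ[ℝ] ℝ) (lam₁ : ℝ) (hlam₁ : 0 < lam₁)
    (hsymm : ∀ u v : H, a u v = a v u)
    (hcoer : ∀ v : H, lam₁ * ‖v‖ ^ 2 ≤ a v v)
    (b : H →ₗ[ℝ] H →ₗ[ℝ] H →ₗ[ℝ] ℝ)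
    (hb : ∀ u v : H, b u v v = 0)
    (μ γ δ k F : ℝ) (hμ : 0 < μ) (hγ : 0 < γ) (hk : 0 < k)
    (N : ℕ) (f : ℕ → H) (hf : ∀ n : ℕ, 1 ≤ n → n ≤ N → ‖f n‖ ≤ F)
    (U : ℕ → H)
    (scheme : ∀ n : ℕ, 1 ≤ n → n ≤ N → ∀ φ : H,
      ⟪(1 / k) • (U n - U (n - 1)), φ⟫ + μ * a (U n) φ +
        a (k • ∑ j ∈ Finset.Icc 1 n,
            (γ * Real.exp (-δ * ((n : ℝ) * k - (j : ℝ) * k))) • U j) φ +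
        b (U n) (U n) φ = ⟪f n, φ⟫)
    (Uβ : ℕ → H)
    (hUβ : ∀ n : ℕ, Uβ n = k • ∑ j ∈ Finset.Icc 1 n,
        (γ * Real.exp (-δ * ((n : ℝ) * k - (j : ℝ) * k))) • U j) :
    ∀ α : ℝ, 0 < α → α ≤ δ →
      Real.exp (α * k) ≤ 1 + (μ * lam₁ / 2) * k →
      ∀ n : ℕ, 1 ≤ n → n ≤ N →
        ‖U n‖ ^ 2 + (Real.exp (-δ * k) / γ) * a (Uβ n) (Uβ n) ≤
          Real.exp (-α * ((n : ℝ) * k)) * ‖U 0‖ ^ 2 +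
            ((1 - Real.exp (-α * ((n : ℝ) * k))) / (α * μ * lam₁)) * F ^ 2 := by
  intro α hα hαδ hαk n _ hnN
  obtain rfl : Uβ = memoryTerm k γ δ U := funext hUβ
  have hc1 : Real.exp (-δ * k) ≤ 1 := Real.exp_le_one_iff.2 (by nlinarith)
  have hec : Real.exp (α * k) * Real.exp (-δ * k) ≤ 1 := by
    rw [← Real.exp_add]
    exact Real.exp_le_one_iff.2 (by nlinarith)
  set E : ℕ → ℝ := fun m => ‖U m‖ ^ 2 + Real.exp (-δ * k) / γ *
    a (memoryTerm k γ δ U m) (memoryTerm k γ δ U m) with hE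
  have hstep : ∀ m, m + 1 ≤ N →
      Real.exp (α * k) * E (m + 1) ≤ E m + k * (F ^ 2 / (μ * lam₁)) := fun m hm => by
    have heq := scheme (m + 1) (by omega) hm (U (m + 1))
    rw [hb, add_zero, Nat.add_sub_cancel] at heq
    exact energy_step a hsymm hcoer hlam₁ hμ hγ hk (Real.exp_pos _).le hc1 hec
      (by nlinarith [mul_pos hk (mul_pos hμ hlam₁)]) (memoryTerm_succ k γ δ U m)
      (hf (m + 1) (by omega) hm) heq
  have hgronwall := le_exp_neg_mul_add_of_exp_mul_le hα (by positivity) hstep hnN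
  simp only [hE, memoryTerm_zero, map_zero, mul_zero, add_zero] at hgronwall
  convert hgronwall using 2
  ring

/-- Abstract form of the uniform-in-time estimate (4.11) of Lemma 4.2 for the
backward Euler scheme applied to the Oldroyd model. -/
theorem backward_euler_uniform_estimate
    {H : Type*} [NormedAddCommGroup H] [InnerProductSpace ℝ H]
    (a : H →ₗ[ℝ] H →ₗ[ℝ] ℝ) (lam₁ : ℝ) (hlam₁ : 0 < lam₁)
    (hsymm : ∀ u v : H, a u v = a v u)
    (hcoer : ∀ v : H, lam₁ * ‖v‖ ^ 2 ≤ a v v)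
    (b : H →ₗ[ℝ] H →ₗ[ℝ] H →ₗ[ℝ] ℝ)
    (hb : ∀ u v : H, b u v v = 0)
    (μ γ δ k F : ℝ) (hμ : 0 < μ) (hγ : 0 < γ) (hδ : 0 < δ) (hk : 0 < k)
    (N : ℕ) (f : ℕ → H) (hf : ∀ n : ℕ, 1 ≤ n → n ≤ N → ‖f n‖ ≤ F)
    (U : ℕ → H)
    (scheme : ∀ n : ℕ, 1 ≤ n → n ≤ N → ∀ φ : H,
      ⟪(1 / k) • (U n - U (n - 1)), φ⟫ + μ * a (U n) φ +
        a (k • ∑ j ∈ Finset.Icc 1 n,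
            (γ * Real.exp (-δ * ((n : ℝ) * k - (j : ℝ) * k))) • U j) φ +
        b (U n) (U n) φ = ⟪f n, φ⟫)
    (Uβ : ℕ → H)
    (hUβ : ∀ n : ℕ, Uβ n = k • ∑ j ∈ Finset.Icc 1 n,
        (γ * Real.exp (-δ * ((n : ℝ) * k - (j : ℝ) * k))) • U j) :
    ∀ α : ℝ, 0 < α → α ≤ δ →
      Real.exp (α * k) ≤ 1 + (μ * lam₁ / 2) * k →
      ∀ n : ℕ, 1 ≤ n → n ≤ N →
        ‖U n‖ ^ 2 + (Real.exp (-δ * k) / γ) * a (Uβ n) (Uβ n) ≤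
          Real.exp (-α * ((n : ℝ) * k)) * ‖U 0‖ ^ 2 +
            ((1 - Real.exp (-α * ((n : ℝ) * k))) / (α * μ * lam₁)) * F ^ 2 :=
  backward_euler_uniform_estimate_general a lam₁ hlam₁ hsymm hcoer b hb μ γ δ k F hμ hγ hk N f hf U
    scheme Uβ hUβ
end

section
/- Let H be a real inner product space, a : H × H → ℝ a symmetric positive semidefinite bilinear form with a(v,v) ≥ λ₁·‖v‖² for all v ∈ H for some λ₁ > 0, and b : H × H × H → ℝ a trilinear map with b(u,v,v) = 0 for all u, v ∈ H. Let μ, γ, δ, k > 0, set t_i = i·k, let f^1, …, f^N ∈ H with ‖f^n‖ ≤ F for all n, and let U^0, …, U^N ∈ H satisfy, for every 1 ≤ n ≤ N and every φ ∈ H, ⟨(U^n − U^{n−1})/k, φ⟩ + μ·a(U^n, φ) + a( k·∑_{j=1}^{n} γ·e^{−δ(t_n−t_j)}·U^j, φ ) + b(U^n, U^n, φ) = ⟨f^n, φ⟩. Define U^n_β = k·∑_{j=1}^{n} γ·e^{−δ(t_n−t_j)}·U^j with U^0_β = 0, and fix α with 0 < α ≤ δ and e^{αk} ≤ 1 + (μλ₁/2)·k.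 Then for all natural numbers m ≥ 1 and l ≥ 0 with m + l ≤ N: k·∑_{n=m}^{m+l} ( μ·a(U^n, U^n) + (2δ·e^{−δk}/γ)·a(U^n_β, U^n_β) ) ≤ ‖U^0‖² + (1/(α·μ·λ₁))·F² + ((l+1)·k/(μ·λ₁))·F². -/
/-!
Test the scheme with `φ = U n`: the convection term vanishes, and the recursion
`Uβ (n + 1) = q • Uβ n + (k * γ) • U (n + 1)`, `q = exp (-δ * k)`, turns the memory term
into a telescoping one. For the energy `E n = ‖U n‖ ^ 2 + q / γ * a (Uβ n) (Uβ n)` this gives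
`E (n + 1) + k μ a(U, U) + 2 (1 - q) / γ * a(Uβ, Uβ) ≤ E n + k F² / (μ λ₁)`.
As `δ k q ≤ 1 - q`, summing over the window bounds the left side of the estimate by
`E (m - 1) + (l + 1) k F² / (μ λ₁)`. The same dissipation also dominates
`(exp (α k) - 1) E (n + 1)`, so `E` is a damped sequence and stays below
`‖U 0‖ ^ 2 + F² / (α μ λ₁)`.
-/

open scoped RealInnerProductSpace
open Finset Real

/-- `U^n_β`: the right-rectangle rule for `∫₀^{t_n} γ e^{-δ (t_n - s)} U(s) ds`. -/
noncomputable def memorySum {E : Type*} [AddCommGroup E] [Module ℝ E] (γ δ k : ℝ)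
    (U : ℕ → E) (n : ℕ) : E :=
  k • ∑ j ∈ Icc 1 n, (γ * exp (-δ * ((n : ℝ) * k - (j : ℝ) * k))) • U j

section Memory
variable {E : Type*} [AddCommGroup E] [Module ℝ E] (γ δ k : ℝ) (U : ℕ → E)

@[simp]
theorem memorySum_zero : memorySum γ δ k U 0 = 0 := by
  simp [memorySum]

theorem memorySum_succ (n : ℕ) :
    memorySum γ δ k U (n + 1) = exp (-δ * k) • memorySum γ δ k U n + (k * γ) • U (n + 1) := by
  have hshift : ∀ j : ℕ, exp (-δ * (((n + 1 : ℕ) : ℝ) * k - j * k)) =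
      exp (-δ * k) * exp (-δ * (n * k - j * k)) := fun j => by
    rw [← exp_add]; push_cast; ring_nf
  rw [memorySum, memorySum, sum_Icc_succ_top (Nat.le_add_left 1 n), sub_self, mul_zero,
    exp_zero, mul_one, smul_add, smul_smul]
  simp only [hshift, smul_sum, smul_smul]
  congr 1
  exact sum_congr rfl fun j _ => by ring_nf

end Memory

theorem mul_exp_neg_le_one_sub (x : ℝ) : x * exp (-x) ≤ 1 - exp (-x) := by
  have := mul_le_mul_of_nonneg_right (add_one_le_exp x) (exp_pos (-x)).le
  rw [← exp_add, add_neg_cancel, exp_zero] at this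
  linarith

theorem two_mul_apply_le_add {R M : Type*} [CommRing R] [LinearOrder R] [IsStrictOrderedRing R]
    [AddCommGroup M] [Module R M] (a : M →ₗ[R] M →ₗ[R] R) (hsymm : ∀ u v, a u v = a v u)
    (hpos : ∀ v, 0 ≤ a v v) (x y : M) : 2 * a x y ≤ a x x + a y y := by
  have h := hpos (x - y)
  simp only [map_sub, LinearMap.sub_apply, hsymm y x] at h
  linarith

section Energy
variable {H : Type*} [NormedAddCommGroup H] [InnerProductSpace ℝ H]

theorem two_mul_inner_le_of_norm_le {c F : ℝ} (hc : 0 < c) {f : H} (hf : ‖f‖ ≤ F) (u : H) :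
    2 * ⟪f, u⟫ ≤ c * ‖u‖ ^ 2 + F ^ 2 / c := by
  have hcs : ⟪f, u⟫ ≤ F * ‖u‖ :=
    (real_inner_le_norm f u).trans (mul_le_mul_of_nonneg_right hf (norm_nonneg u))
  have hsq : c * ‖u‖ ^ 2 + F ^ 2 / c - 2 * (F * ‖u‖) = (c * ‖u‖ - F) ^ 2 / c := by
    field_simp; ring
  have : 0 ≤ (c * ‖u‖ - F) ^ 2 / c := by positivity
  linarith

variable (a : H →ₗ[ℝ] H →ₗ[ℝ] ℝ) {lam₁ μ γ k q F : ℝ}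

noncomputable def energy (γ q : ℝ) (u y : H) : ℝ := ‖u‖ ^ 2 + q / γ * a y y

theorem energy_nonneg (hγ : 0 ≤ γ) (hq : 0 ≤ q) (hpos : ∀ v, 0 ≤ a v v) (u y : H) :
    0 ≤ energy a γ q u y :=
  add_nonneg (sq_nonneg _) (mul_nonneg (div_nonneg hq hγ) (hpos y))

theorem energy_add_dissipation_le_of_scheme (b : H →ₗ[ℝ] H →ₗ[ℝ] H →ₗ[ℝ] ℝ)
    (hb : ∀ u v, b u v v = 0) (hlam₁ : 0 < lam₁) (hμ : 0 < μ) (hγ : 0 < γ) (hk : 0 < k) (hq : 0 ≤ q)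
    (hsymm : ∀ u v, a u v = a v u) (hcoer : ∀ v, lam₁ * ‖v‖ ^ 2 ≤ a v v)
    {u u' y y' f : H} (hf : ‖f‖ ≤ F) (hy : y' = q • y + (k * γ) • u')
    (hscheme : ⟪(1 / k) • (u' - u), u'⟫ + μ * a u' u' + a y' u' + b u' u' u' = ⟪f, u'⟫) :
    energy a γ q u' y' + (k * μ * a u' u' + 2 * (1 - q) / γ * a y' y') ≤
      energy a γ q u y + k * (F ^ 2 / (μ * lam₁)) := by
  have hpos : ∀ v, 0 ≤ a v v := fun v => (by positivity : 0 ≤ lam₁ * ‖v‖ ^ 2).trans (hcoer v)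
  have hincrement :
      2 * k * ⟪(1 / k) • (u' - u), u'⟫ = ‖u'‖ ^ 2 - ‖u‖ ^ 2 + ‖u' - u‖ ^ 2 := by
    rw [real_inner_smul_left, inner_sub_left, real_inner_self_eq_norm_sq, norm_sub_sq_real,
      real_inner_comm]
    field_simp
    ring
  have hforcing : 2 * ⟪f, u'⟫ ≤ μ * a u' u' + F ^ 2 / (μ * lam₁) := by
    linear_combination two_mul_inner_le_of_norm_le (mul_pos hμ hlam₁) hf u' + μ * hcoer u'
  have hmemory : k * γ * a y' u' = a y' y' - q * a y' y := by
    have : (k * γ) • u' = y' - q • y := by rw [hy]; abel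
    rw [← smul_eq_mul, ← map_smul, this, map_sub, map_smul, smul_eq_mul]
  have hcs := two_mul_apply_le_add a hsymm hpos y' y
  have key : γ * ‖u'‖ ^ 2 + q * a y' y' + (γ * k * μ * a u' u' + 2 * (1 - q) * a y' y') ≤
      γ * ‖u‖ ^ 2 + q * a y y + γ * (k * (F ^ 2 / (μ * lam₁))) := by
    linear_combination (2 * k * γ) * (hscheme - hb u' u') - γ * hincrement
      + (k * γ) * hforcing - 2 * hmemory + q * hcs + γ * sq_nonneg ‖u' - u‖
  have hcancel : ∀ c x : ℝ, γ * (c / γ * x) = c * x := fun c x => by field_simp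
  refine le_of_mul_le_mul_left ?_ hγ
  simp only [energy, mul_add, hcancel]
  linear_combination key

theorem mul_energy_le_add_dissipation (hμ : 0 < μ) (hγ : 0 < γ) (hk : 0 < k) (hq₁ : q ≤ 1)
    {r : ℝ} (hr : r ≤ 1 + μ * lam₁ / 2 * k) (hrq : r * q ≤ 1)
    (hcoer : ∀ v, lam₁ * ‖v‖ ^ 2 ≤ a v v) (hpos : ∀ v, 0 ≤ a v v) (u y : H) :
    r * energy a γ q u y ≤
      energy a γ q u y + (k * μ * a u u + 2 * (1 - q) / γ * a y y) := by
  have hA : 0 ≤ a y y / γ := div_nonneg (hpos y) hγ.le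
  rw [energy]
  linear_combination mul_le_mul_of_nonneg_right hr (sq_nonneg ‖u‖) + (k * μ / 2) * hcoer u +
    mul_le_mul_of_nonneg_right hrq hA + mul_nonneg (sub_nonneg.2 hq₁) hA + (k * μ / 2) * hpos u

end Energy

section Sequences
variable {E D : ℕ → ℝ} {c : ℝ} {N : ℕ}

theorem le_add_div_of_mul_succ_le {r ρ : ℝ} (hρ : 0 < ρ) (hr : 1 + ρ ≤ r) (hE₀ : 0 ≤ E 0)
    (hc : 0 ≤ c) (hstep : ∀ n, n + 1 ≤ N → r * E (n + 1) ≤ E n + c) :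
    ∀ n ≤ N, E n ≤ E 0 + c / ρ := by
  set B := E 0 + c / ρ
  have hB : c ≤ (r - 1) * B := calc
    c = ρ * (c / ρ) := (mul_div_cancel₀ c hρ.ne').symm
    _ ≤ (r - 1) * B := by gcongr <;> linarith [div_nonneg hc hρ.le]
  intro n
  induction n with
  | zero => intro _; linarith [div_nonneg hc hρ.le]
  | succ n ih =>
    intro hn
    refine le_of_mul_le_mul_left ?_ (by linarith : 0 < r)
    linarith [hstep n hn, ih (by omega)]

theorem add_sum_Icc_le_of_succ_le
    (hstep : ∀ n, n + 1 ≤ N → E (n + 1) + D (n + 1) ≤ E n + c) (m l : ℕ) (hm : 1 ≤ m)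
    (hml : m + l ≤ N) : E (m + l) + ∑ n ∈ Icc m (m + l), D n ≤ E (m - 1) + (l + 1) * c := by
  induction l with
  | zero =>
    obtain ⟨p, rfl⟩ : ∃ p, m = p + 1 := ⟨m - 1, by omega⟩
    simpa using hstep p hml
  | succ l ih =>
    rw [← add_assoc, sum_Icc_succ_top (by omega)]
    push_cast
    linarith [ih (by omega), hstep (m + l) (by omega)]

end Sequences

theorem backward_euler_window_estimate_general
    {H : Type*} [NormedAddCommGroup H] [InnerProductSpace ℝ H]
    (a : H →ₗ[ℝ] H →ₗ[ℝ] ℝ) (lam₁ : ℝ) (hlam₁ : 0 < lam₁)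
    (hsymm : ∀ u v : H, a u v = a v u)
    (hcoer : ∀ v : H, lam₁ * ‖v‖ ^ 2 ≤ a v v)
    (b : H →ₗ[ℝ] H →ₗ[ℝ] H →ₗ[ℝ] ℝ)
    (hb : ∀ u v : H, b u v v = 0)
    (μ γ δ k F : ℝ) (hμ : 0 < μ) (hγ : 0 < γ) (hk : 0 < k)
    (N : ℕ) (f : ℕ → H) (hf : ∀ n : ℕ, 1 ≤ n → n ≤ N → ‖f n‖ ≤ F)
    (U : ℕ → H)
    (scheme : ∀ n : ℕ, 1 ≤ n → n ≤ N → ∀ φ : H,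
      ⟪(1 / k) • (U n - U (n - 1)), φ⟫ + μ * a (U n) φ +
        a (k • ∑ j ∈ Finset.Icc 1 n,
            (γ * Real.exp (-δ * ((n : ℝ) * k - (j : ℝ) * k))) • U j) φ +
        b (U n) (U n) φ = ⟪f n, φ⟫)
    (Uβ : ℕ → H)
    (hUβ : ∀ n : ℕ, Uβ n = k • ∑ j ∈ Finset.Icc 1 n,
        (γ * Real.exp (-δ * ((n : ℝ) * k - (j : ℝ) * k))) • U j)
    (α : ℝ) (hα : 0 < α) (hαδ : α ≤ δ)
    (hαk : Real.exp (α * k) ≤ 1 + (μ * lam₁ / 2) * k) :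
    ∀ m l : ℕ, 1 ≤ m → m + l ≤ N →
      k * ∑ n ∈ Finset.Icc m (m + l),
          (μ * a (U n) (U n) +
            (2 * δ * Real.exp (-δ * k) / γ) * a (Uβ n) (Uβ n)) ≤
        ‖U 0‖ ^ 2 + (1 / (α * μ * lam₁)) * F ^ 2 +
          (((l : ℝ) + 1) * k / (μ * lam₁)) * F ^ 2 := by
  intro m l hm hml
  set q := exp (-δ * k)
  set C := F ^ 2 / (μ * lam₁)
  have hq₀ : 0 ≤ q := (exp_pos _).le
  have hrq : exp (α * k) * q ≤ 1 := by rw [← exp_add, exp_le_one_iff]; nlinarith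
  have hq₁ : q ≤ 1 := (le_mul_of_one_le_left hq₀ (one_le_exp (by positivity))).trans hrq
  have hpos : ∀ v, 0 ≤ a v v := fun v => (by positivity : 0 ≤ lam₁ * ‖v‖ ^ 2).trans (hcoer v)
  have hUβ_eq : Uβ = memorySum γ δ k U := funext hUβ
  set E := fun n => energy a γ q (U n) (Uβ n)
  have hE₀ : E 0 = ‖U 0‖ ^ 2 := by simp [E, energy, hUβ_eq]
  have hstep : ∀ n, n + 1 ≤ N → E (n + 1) +
      (k * μ * a (U (n + 1)) (U (n + 1)) + 2 * (1 - q) / γ * a (Uβ (n + 1)) (Uβ (n + 1))) ≤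
      E n + k * C := by
    intro n hn
    refine energy_add_dissipation_le_of_scheme a b hb hlam₁ hμ hγ hk hq₀ hsymm hcoer
      (hf (n + 1) (by omega) hn) (hUβ_eq ▸ memorySum_succ γ δ k U n) ?_
    simpa only [← hUβ, Nat.add_sub_cancel] using scheme (n + 1) (by omega) hn (U (n + 1))
  have hdecay : ∀ n, n + 1 ≤ N → exp (α * k) * E (n + 1) ≤ E n + k * C := fun n hn =>
    (mul_energy_le_add_dissipation a hμ hγ hk hq₁ hαk hrq hcoer hpos _ _).trans (hstep n hn)
  have hbound : E (m - 1) ≤ ‖U 0‖ ^ 2 + k * C / (α * k) := hE₀ ▸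
    le_add_div_of_mul_succ_le (by positivity) (by linarith [add_one_le_exp (α * k)])
      (energy_nonneg a hγ.le hq₀ hpos _ _) (by positivity) hdecay (m - 1) (by omega)
  have hwindow := add_sum_Icc_le_of_succ_le (E := E) (c := k * C)
    (D := fun n => k * (μ * a (U n) (U n) + 2 * δ * q / γ * a (Uβ n) (Uβ n)))
    (fun n hn => by
      have hδq := mul_exp_neg_le_one_sub (δ * k)
      rw [← neg_mul] at hδq
      linear_combination hstep n hn +
        2 * mul_le_mul_of_nonneg_right hδq (div_nonneg (hpos (Uβ (n + 1))) hγ.le)) m l hm hml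
  have hE : 0 ≤ E (m + l) := energy_nonneg a hγ.le hq₀ hpos _ _
  calc k * ∑ n ∈ Icc m (m + l), (μ * a (U n) (U n) + 2 * δ * q / γ * a (Uβ n) (Uβ n))
      ≤ ‖U 0‖ ^ 2 + k * C / (α * k) + (l + 1) * (k * C) := by
        rw [mul_sum]
        linarith
    _ = ‖U 0‖ ^ 2 + (1 / (α * μ * lam₁)) * F ^ 2 +
          (((l : ℝ) + 1) * k / (μ * lam₁)) * F ^ 2 := by
        simp only [C]
        field_simp

/-- Abstract form of the uniform time-window estimate (4.12) of Lemma 4.2 for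
the backward Euler scheme applied to the Oldroyd model. -/
theorem backward_euler_window_estimate
    {H : Type*} [NormedAddCommGroup H] [InnerProductSpace ℝ H]
    (a : H →ₗ[ℝ] H →ₗ[ℝ] ℝ) (lam₁ : ℝ) (hlam₁ : 0 < lam₁)
    (hsymm : ∀ u v : H, a u v = a v u)
    (hcoer : ∀ v : H, lam₁ * ‖v‖ ^ 2 ≤ a v v)
    (b : H →ₗ[ℝ] H →ₗ[ℝ] H →ₗ[ℝ] ℝ)
    (hb : ∀ u v : H, b u v v = 0)
    (μ γ δ k F : ℝ) (hμ : 0 < μ) (hγ : 0 < γ) (hδ : 0 < δ) (hk : 0 < k)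
    (N : ℕ) (f : ℕ → H) (hf : ∀ n : ℕ, 1 ≤ n → n ≤ N → ‖f n‖ ≤ F)
    (U : ℕ → H)
    (scheme : ∀ n : ℕ, 1 ≤ n → n ≤ N → ∀ φ : H,
      ⟪(1 / k) • (U n - U (n - 1)), φ⟫ + μ * a (U n) φ +
        a (k • ∑ j ∈ Finset.Icc 1 n,
            (γ * Real.exp (-δ * ((n : ℝ) * k - (j : ℝ) * k))) • U j) φ +
        b (U n) (U n) φ = ⟪f n, φ⟫)
    (Uβ : ℕ → H)
    (hUβ : ∀ n : ℕ, Uβ n = k • ∑ j ∈ Finset.Icc 1 n,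
        (γ * Real.exp (-δ * ((n : ℝ) * k - (j : ℝ) * k))) • U j)
    (α : ℝ) (hα : 0 < α) (hαδ : α ≤ δ)
    (hαk : Real.exp (α * k) ≤ 1 + (μ * lam₁ / 2) * k) :
    ∀ m l : ℕ, 1 ≤ m → m + l ≤ N →
      k * ∑ n ∈ Finset.Icc m (m + l),
          (μ * a (U n) (U n) +
            (2 * δ * Real.exp (-δ * k) / γ) * a (Uβ n) (Uβ n)) ≤
        ‖U 0‖ ^ 2 + (1 / (α * μ * lam₁)) * F ^ 2 +
          (((l : ℝ) + 1) * k / (μ * lam₁)) * F ^ 2 :=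
  backward_euler_window_estimate_general a lam₁ hlam₁ hsymm hcoer b hb μ γ δ k F hμ hγ hk N f hf U
    scheme Uβ hUβ α hα hαδ hαk
end

section
/- There exists a constant C > 0 such that for every time step k with 0 < k ≤ 1, every integer n ≥ 1, and every measurable function g : [0, n·k] → [0, ∞) with ∫_0^{nk} min(1, t)·g(t)² dt < ∞, setting t_i = i·k, one has (1/k)·∑_{i=1}^{n} ( ∫_{t_{i−1}}^{t_i} (t − t_{i−1})·g(t) dt )² ≤ C·k·(1 + log(1/k))·∫_0^{nk} min(1, t)·g(t)² dt. -/
/-!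
For `t ∈ (t_{i-1}, t_i]` one has `t - t_{i-1} ≤ min k t` and `k ≤ 1`, hence
`(t - t_{i-1})² ≤ k · min 1 t`. Cauchy–Schwarz on the step interval then bounds the `i`-th squared
integral by `k² ∫_{t_{i-1}}^{t_i} min 1 t · g²`; summing over the steps, the left side is at most
`k ∫_0^{nk} min 1 t · g²`, and `1 ≤ 1 + log (1/k)`.
-/
open MeasureTheory Set

theorem sq_integral_le_measureReal_univ_mul_integral_sq {α : Type*} [MeasurableSpace α]
    {μ : Measure α} [IsFiniteMeasure μ] {f : α → ℝ} (hf : MemLp f 2 μ) :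
    (∫ x, f x ∂μ) ^ 2 ≤ μ.real univ * ∫ x, f x ^ 2 ∂μ := by
  rcases eq_zero_or_neZero μ with rfl | _
  · simp
  have hjensen : (⨍ x, f x ∂μ) ^ 2 ≤ ⨍ x, f x ^ 2 ∂μ :=
    even_two.convexOn_pow.map_average_le (continuous_pow 2).continuousOn isClosed_univ
      (by simp) (hf.integrable one_le_two) hf.integrable_sq
  rw [average_eq, average_eq, smul_eq_mul, smul_eq_mul, mul_pow] at hjensen
  have hscaled := mul_le_mul_of_nonneg_left hjensen (sq_nonneg (μ.real univ))
  field_simp at hscaled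
  linarith

theorem sq_sub_le_mul_min_one {a b t : ℝ} (ha : 0 ≤ a) (hba : b - a ≤ 1) (ht : t ∈ Ioc a b) :
    (t - a) ^ 2 ≤ (b - a) * min 1 t :=
  calc (t - a) ^ 2 = (t - a) * (t - a) := sq _
    _ ≤ (b - a) * (t - a) := by gcongr <;> linarith [ht.1, ht.2]
    _ ≤ (b - a) * min 1 t := by
      gcongr
      · linarith [ht.1, ht.2]
      · exact le_min (by linarith [ht.2]) (by linarith)

theorem sq_intervalIntegral_sub_mul_le {a b : ℝ} {g : ℝ → ℝ} (ha : 0 ≤ a) (hab : a ≤ b)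
    (hba : b - a ≤ 1) (hg : Measurable g)
    (hint : IntegrableOn (fun t => min 1 t * g t ^ 2) (Ioc a b)) :
    (∫ t in a..b, (t - a) * g t) ^ 2 ≤ (b - a) ^ 2 * ∫ t in a..b, min 1 t * g t ^ 2 := by
  rw [intervalIntegral.integral_of_le hab, intervalIntegral.integral_of_le hab]
  have hmeas : Measurable fun t => (t - a) * g t := (measurable_id.sub_const a).mul hg
  have hpt : ∀ᵐ t ∂volume.restrict (Ioc a b), ((t - a) * g t) ^ 2 ≤ (b - a) * (min 1 t * g t ^ 2) := by
    refine ae_restrict_of_forall_mem measurableSet_Ioc fun t ht => ?_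
    rw [mul_pow, ← mul_assoc]
    exact mul_le_mul_of_nonneg_right (sq_sub_le_mul_min_one ha hba ht) (sq_nonneg _)
  have hsq : IntegrableOn (fun t => ((t - a) * g t) ^ 2) (Ioc a b) :=
    (hint.const_mul (b - a)).mono' (hmeas.pow_const 2).aestronglyMeasurable
      (hpt.mono fun t ht => by rwa [Real.norm_of_nonneg (sq_nonneg _)])
  calc (∫ t in Ioc a b, (t - a) * g t) ^ 2
      ≤ volume.real (Ioc a b) * ∫ t in Ioc a b, ((t - a) * g t) ^ 2 := by
        simpa using sq_integral_le_measureReal_univ_mul_integral_sq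
          ((memLp_two_iff_integrable_sq hmeas.aestronglyMeasurable).2 hsq)
    _ ≤ (b - a) * ((b - a) * ∫ t in Ioc a b, min 1 t * g t ^ 2) := by
        rw [Real.volume_real_Ioc_of_le hab,
          ← integral_const_mul (b - a) (fun t => min 1 t * g t ^ 2)]
        exact mul_le_mul_of_nonneg_left (integral_mono_ae hsq (hint.const_mul _) hpt)
          (sub_nonneg.2 hab)
    _ = (b - a) ^ 2 * ∫ t in Ioc a b, min 1 t * g t ^ 2 := by ring

theorem sum_intervalIntegral_Icc_eq {f : ℝ → ℝ} {k : ℝ} (hk : 0 ≤ k) (n : ℕ)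
    (hf : IntegrableOn f (Icc 0 (n * k))) :
    ∑ i ∈ Finset.Icc 1 n, ∫ t in ((i : ℝ) - 1) * k..(i : ℝ) * k, f t = ∫ t in 0..n * k, f t := by
  induction n with
  | zero => simp
  | succ n ih =>
    have hsub : Icc 0 (n * k) ⊆ Icc 0 ((n + 1 : ℕ) * k) :=
      Icc_subset_Icc le_rfl (by gcongr; simp)
    rw [Finset.sum_Icc_succ_top (by omega), ih (hf.mono_set hsub)]
    push_cast
    rw [add_sub_cancel_right, intervalIntegral.integral_add_adjacent_intervals]
    · exact (hf.mono_set (by rwa [uIcc_of_le (by positivity)])).intervalIntegrable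
    · refine (hf.mono_set ?_).intervalIntegrable
      rw [uIcc_of_le (by nlinarith)]
      exact Icc_subset_Icc (by positivity) (by push_cast; rfl)

/-- Weighted ℓ² bound on the local backward-Euler truncation sums
(core of Lemma 5.1, case r = 0). -/
theorem truncation_sum_bound_r0 :
    ∃ C : ℝ, 0 < C ∧
      ∀ k : ℝ, 0 < k → k ≤ 1 → ∀ n : ℕ, 1 ≤ n →
        ∀ g : ℝ → ℝ, Measurable g →
          (∀ t ∈ Set.Icc (0:ℝ) ((n : ℝ) * k), 0 ≤ g t) →
          MeasureTheory.IntegrableOn (fun t => min 1 t * (g t) ^ 2)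
            (Set.Icc (0:ℝ) ((n : ℝ) * k)) →
          (1 / k) * ∑ i ∈ Finset.Icc 1 n,
              (∫ t in (((i : ℝ) - 1) * k)..((i : ℝ) * k),
                (t - ((i : ℝ) - 1) * k) * g t) ^ 2 ≤
            C * k * (1 + Real.log (1 / k)) *
              ∫ t in (0:ℝ)..((n : ℝ) * k), min 1 t * (g t) ^ 2 := by
  refine ⟨1, one_pos, fun k hk hk1 n _ g hg _ hint => ?_⟩
  set T := ∫ t in (0:ℝ)..(n : ℝ) * k, min 1 t * g t ^ 2
  have hT : 0 ≤ T := intervalIntegral.integral_nonneg (by positivity)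
    fun t ht => mul_nonneg (le_min zero_le_one ht.1) (sq_nonneg _)
  have hterm : ∀ i ∈ Finset.Icc 1 n,
      (∫ t in ((i : ℝ) - 1) * k..(i : ℝ) * k, (t - ((i : ℝ) - 1) * k) * g t) ^ 2 ≤
        k ^ 2 * ∫ t in ((i : ℝ) - 1) * k..(i : ℝ) * k, min 1 t * g t ^ 2 := by
    intro i hi
    obtain ⟨hi1, hin⟩ := Finset.mem_Icc.1 hi
    have hi1' : (1 : ℝ) ≤ i := by exact_mod_cast hi1
    have hin' : (i : ℝ) ≤ n := by exact_mod_cast hin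
    have hlen : (i : ℝ) * k - (i - 1) * k = k := by ring
    simpa only [hlen] using sq_intervalIntegral_sub_mul_le (a := (i - 1) * k) (b := i * k)
      (by nlinarith) (by nlinarith)
      (by linarith) hg (hint.mono_set (Ioc_subset_Icc_self.trans
        (Icc_subset_Icc (by nlinarith) (by nlinarith))))
  have hsum := (Finset.sum_le_sum hterm).trans_eq
    (by rw [← Finset.mul_sum, sum_intervalIntegral_Icc_eq hk.le n hint])
  have hlog : 0 ≤ Real.log (1 / k) := Real.log_nonneg (one_le_one_div hk hk1)
  calc (1 / k) * ∑ i ∈ Finset.Icc 1 n,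
        (∫ t in ((i : ℝ) - 1) * k..(i : ℝ) * k, (t - ((i : ℝ) - 1) * k) * g t) ^ 2
      ≤ 1 / k * (k ^ 2 * T) := by gcongr
    _ = k * T := by field_simp
    _ ≤ 1 * k * (1 + Real.log (1 / k)) * T := by nlinarith [mul_nonneg (mul_nonneg hk.le hlog) hT]
end

section
/- For every time step k with 0 < k ≤ 1, every integer n ≥ 1, and every measurable function h : [0, n·k] → [0, ∞) with ∫_0^{nk} h(t)² dt < ∞, setting t_i = i·k, one has (1/k)·∑_{i=1}^{n} ( ∫_{t_{i−1}}^{t_i} ((t − t_{i−1})/min(1, t))·h(t) dt )² ≤ ∫_0^{nk} h(t)² dt. -/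
/-!
On `[t_{i-1}, t_i]` the weight `(t - t_{i-1}) / min 1 t` lies in `[0, 1]`: for `t ≤ 1` because
`t_{i-1} ≥ 0`, for `t ≥ 1` because `t - t_{i-1} ≤ k ≤ 1`. Cauchy–Schwarz on an interval of length
`k` therefore bounds each squared integral by `k ∫_{t_{i-1}}^{t_i} h²`, and these integrals add up
to `∫_0^{nk} h²`.
-/

open MeasureTheory Set

theorem sq_intervalIntegral_le_mul_integral_sq {f : ℝ → ℝ} {a b : ℝ} (hab : a ≤ b)
    (hf : AEStronglyMeasurable f (volume.restrict (Ioc a b)))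
    (hf2 : IntervalIntegrable (fun t => f t ^ 2) volume a b) :
    (∫ t in a..b, f t) ^ 2 ≤ (b - a) * ∫ t in a..b, f t ^ 2 := by
  rcases hab.eq_or_lt with rfl | hlt
  · simp
  have hf1 : IntegrableOn f (Ioc a b) :=
    ((memLp_two_iff_integrable_sq hf).2 hf2.1).integrable one_le_two
  have hjensen := (even_two.convexOn_pow (𝕜 := ℝ)).map_set_average_le
    (continuous_pow 2).continuousOn isClosed_univ (μ := volume) (t := Ioc a b)
    (by simp [hlt]) (by simp) (by simp) hf1 hf2.1
  simp only [setAverage_eq, Real.volume_real_Ioc_of_le hab, smul_eq_mul, mul_pow, inv_pow,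
    ← intervalIntegral.integral_of_le hab] at hjensen
  have hba : 0 < b - a := sub_pos.2 hlt
  rw [← div_eq_inv_mul, ← div_eq_inv_mul, div_le_div_iff₀ (by positivity) hba] at hjensen
  nlinarith

theorem abs_sub_div_min_one_le_one {a t : ℝ} (ha : 0 ≤ a) (hat : a ≤ t) (hta : t - a ≤ 1) :
    |(t - a) / min 1 t| ≤ 1 := by
  have ht : 0 ≤ min 1 t := le_min zero_le_one (ha.trans hat)
  rw [abs_of_nonneg (div_nonneg (sub_nonneg.2 hat) ht)]
  refine div_le_one_of_le₀ ?_ ht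
  rcases le_total 1 t with h1t | ht1
  · rwa [min_eq_left h1t]
  · rw [min_eq_right ht1]; linarith

theorem sq_intervalIntegral_sub_div_min_one_mul_le {h : ℝ → ℝ} {a b : ℝ} (ha : 0 ≤ a)
    (hab : a ≤ b) (hba : b - a ≤ 1) (hh : AEStronglyMeasurable h volume)
    (hh2 : IntervalIntegrable (fun t => h t ^ 2) volume a b) :
    (∫ t in a..b, (t - a) / min 1 t * h t) ^ 2 ≤ (b - a) * ∫ t in a..b, h t ^ 2 := by
  have hle : ∀ t ∈ Icc a b, ((t - a) / min 1 t * h t) ^ 2 ≤ h t ^ 2 := fun t ht => by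
    rw [mul_pow]
    refine mul_le_of_le_one_left (sq_nonneg _) (sq_le_one_iff_abs_le_one _ |>.2 ?_)
    exact abs_sub_div_min_one_le_one ha ht.1 (by linarith [ht.2])
  have hmeas : AEStronglyMeasurable (fun t => (t - a) / min 1 t * h t) volume :=
    (by fun_prop : Measurable fun t : ℝ => (t - a) / min 1 t).aestronglyMeasurable.mul hh
  have hweighted2 : IntervalIntegrable (fun t => ((t - a) / min 1 t * h t) ^ 2) volume a b := by
    refine hh2.mono_fun (hmeas.pow 2).restrict ?_
    rw [uIoc_of_le hab, Filter.EventuallyLE, ae_restrict_iff' measurableSet_Ioc]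
    refine .of_forall fun t ht => ?_
    simp only [Real.norm_eq_abs, abs_pow, sq_abs]
    exact hle t (Ioc_subset_Icc_self ht)
  calc (∫ t in a..b, (t - a) / min 1 t * h t) ^ 2
      ≤ (b - a) * ∫ t in a..b, ((t - a) / min 1 t * h t) ^ 2 :=
        sq_intervalIntegral_le_mul_integral_sq hab hmeas.restrict hweighted2
    _ ≤ (b - a) * ∫ t in a..b, h t ^ 2 := by
        gcongr
        exact intervalIntegral.integral_mono_on hab hweighted2 hh2 hle

theorem sum_Icc_intervalIntegral_eq {E : Type*} [NormedAddCommGroup E] [NormedSpace ℝ E]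
    {μ : Measure ℝ} {g : ℝ → E} (k : ℝ) (n : ℕ) (hg : IntervalIntegrable g μ 0 (n * k)) :
    ∑ i ∈ Finset.Icc 1 n, ∫ t in ((i : ℝ) - 1) * k..(i : ℝ) * k, g t ∂μ =
      ∫ t in (0 : ℝ)..(n : ℝ) * k, g t ∂μ := by
  induction n with
  | zero => simp
  | succ n ih =>
    have hmem : (n : ℝ) * k ∈ uIcc 0 (((n + 1 : ℕ) : ℝ) * k) := by
      push_cast
      rw [mem_uIcc]
      rcases le_total 0 k with hk | hk
      · exact Or.inl ⟨by positivity, by nlinarith⟩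
      · exact Or.inr ⟨by nlinarith, by nlinarith⟩
    rw [Finset.sum_Icc_succ_top (by omega), ih (hg.mono_set (uIcc_subset_uIcc_left hmem))]
    rw [show ((n + 1 : ℕ) : ℝ) - 1 = n by push_cast; ring]
    exact intervalIntegral.integral_add_adjacent_intervals
      (hg.mono_set (uIcc_subset_uIcc_left hmem)) (hg.mono_set (uIcc_subset_uIcc_right hmem))

theorem truncation_sum_bound_r1_general
    (k : ℝ) (hk0 : 0 < k) (hk1 : k ≤ 1) (n : ℕ)
    (h : ℝ → ℝ) (hmeas : Measurable h)
    (hint : MeasureTheory.IntegrableOn (fun t => (h t) ^ 2)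
      (Set.Icc (0:ℝ) ((n : ℝ) * k))) :
    (1 / k) * ∑ i ∈ Finset.Icc 1 n,
        (∫ t in (((i : ℝ) - 1) * k)..((i : ℝ) * k),
          ((t - ((i : ℝ) - 1) * k) / min 1 t) * h t) ^ 2 ≤
      ∫ t in (0:ℝ)..((n : ℝ) * k), (h t) ^ 2 := by
  have hsq_interval : IntervalIntegrable (fun t => h t ^ 2) volume 0 (n * k) :=
    (intervalIntegrable_iff_integrableOn_Icc_of_le (by positivity)).2 hint
  rw [one_div, inv_mul_le_iff₀ hk0, ← sum_Icc_intervalIntegral_eq k n hsq_interval, Finset.mul_sum]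
  gcongr with i hi
  obtain ⟨hi1, hin⟩ : (1 : ℝ) ≤ i ∧ (i : ℝ) ≤ n := by
    rw [Finset.mem_Icc] at hi; exact ⟨by exact_mod_cast hi.1, by exact_mod_cast hi.2⟩
  have hstep : (i : ℝ) * k - ((i : ℝ) - 1) * k = k := by ring
  have hsub : Icc (((i : ℝ) - 1) * k) (i * k) ⊆ Icc 0 (n * k) :=
    Icc_subset_Icc (by nlinarith) (by nlinarith)
  have hlocal := sq_intervalIntegral_sub_div_min_one_mul_le (a := ((i : ℝ) - 1) * k) (b := i * k)
    (by nlinarith) (by nlinarith) (by linarith) hmeas.aestronglyMeasurable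
    ((intervalIntegrable_iff_integrableOn_Icc_of_le (by nlinarith)).2 (hint.mono_set hsub))
  rwa [hstep] at hlocal

/-- Weighted ℓ² bound on the local backward-Euler truncation sums
(core of Lemma 5.1, case r = 1). -/
theorem truncation_sum_bound_r1
    (k : ℝ) (hk0 : 0 < k) (hk1 : k ≤ 1) (n : ℕ) (hn : 1 ≤ n)
    (h : ℝ → ℝ) (hmeas : Measurable h)
    (hnonneg : ∀ t ∈ Set.Icc (0:ℝ) ((n : ℝ) * k), 0 ≤ h t)
    (hint : MeasureTheory.IntegrableOn (fun t => (h t) ^ 2)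
      (Set.Icc (0:ℝ) ((n : ℝ) * k))) :
    (1 / k) * ∑ i ∈ Finset.Icc 1 n,
        (∫ t in (((i : ℝ) - 1) * k)..((i : ℝ) * k),
          ((t - ((i : ℝ) - 1) * k) / min 1 t) * h t) ^ 2 ≤
      ∫ t in (0:ℝ)..((n : ℝ) * k), (h t) ^ 2 :=
  truncation_sum_bound_r1_general k hk0 hk1 n h hmeas hint
end
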